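/- arXiv:2403.09446 — 11 statements merged into one kernel-verified Lean document; each statement's English description precedes it below -/
import Mathlib

section
/- Let Λ be a lattice with minimum m in a Euclidean space E, and let x, y ∈ Λ be nonzero vectors with y ≠ x, y ≠ −x, and y ≡ x (mod 2). Then N(x) + N(y) ≥ 4m. -/
open scoped InnerProductSpace

/-- With `w = x + z` we have `x = w - z` and `y = w + z`, so this is the parallelogram law. -/
theorem real_inner_self_add_real_inner_self_of_sub_eq_two_smul
    {E : Type*} [NormedAddCommGroup E] [InnerProductSpace ℝ E] {x y z : E}
    (h : y - x = (2 : ℝ) • z) :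
    ⟪x, x⟫_ℝ + ⟪y, y⟫_ℝ = 2 * (⟪x + z, x + z⟫_ℝ + ⟪z, z⟫_ℝ) := by
  have hy : y = (x + z) + z := by linear_combination (norm := module) h
  calc ⟪x, x⟫_ℝ + ⟪y, y⟫_ℝ
      = ⟪(x + z) + z, (x + z) + z⟫_ℝ + ⟪(x + z) - z, (x + z) - z⟫_ℝ := by
        rw [← hy, add_sub_cancel_right, add_comm]
    _ = 2 * (⟪x + z, x + z⟫_ℝ + ⟪z, z⟫_ℝ) := parallelogram_law

theorem norm_add_norm_ge_four_mul_min_general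
    {E : Type*} [NormedAddCommGroup E] [InnerProductSpace ℝ E]
    (Λ : AddSubgroup E) (m : ℝ)
    (hmin : IsLeast {r : ℝ | ∃ x ∈ Λ, x ≠ 0 ∧ ⟪x, x⟫_ℝ = r} m)
    (x y : E) (hx : x ∈ Λ)
    (hyx : y ≠ x) (hyx' : y ≠ -x)
    (hcong : ∃ z ∈ Λ, y - x = (2 : ℝ) • z) :
    4 * m ≤ ⟪x, x⟫_ℝ + ⟪y, y⟫_ℝ := by
  obtain ⟨z, hz, hyxz⟩ := hcong
  have hz0 : z ≠ 0 := by
    rintro rfl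
    exact hyx (sub_eq_zero.mp (by simpa using hyxz))
  have hxz0 : x + z ≠ 0 := by
    intro h
    obtain rfl : z = -x := eq_neg_of_add_eq_zero_right h
    exact hyx' (by linear_combination (norm := module) hyxz)
  have hm_z : m ≤ ⟪z, z⟫_ℝ := hmin.2 ⟨z, hz, hz0, rfl⟩
  have hm_xz : m ≤ ⟪x + z, x + z⟫_ℝ := hmin.2 ⟨x + z, Λ.add_mem hx hz, hxz0, rfl⟩
  rw [real_inner_self_add_real_inner_self_of_sub_eq_two_smul hyxz]
  linarith

/-- Let `Λ` be a lattice with minimum `m` in a Euclidean space `E`,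
and let `x, y ∈ Λ` be nonzero vectors with `y ≠ x`, `y ≠ -x`, and `y ≡ x (mod 2)`.
Then `N(x) + N(y) ≥ 4m`. -/
theorem norm_add_norm_ge_four_mul_min
    {E : Type*} [NormedAddCommGroup E] [InnerProductSpace ℝ E] [FiniteDimensional ℝ E]
    (Λ : AddSubgroup E) (hdisc : DiscreteTopology Λ) (m : ℝ)
    (hmin : IsLeast {r : ℝ | ∃ x ∈ Λ, x ≠ 0 ∧ ⟪x, x⟫_ℝ = r} m)
    (x y : E) (hx : x ∈ Λ) (hy : y ∈ Λ)
    (hx0 : x ≠ 0) (hy0 : y ≠ 0) (hyx : y ≠ x) (hyx' : y ≠ -x)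
    (hcong : ∃ z ∈ Λ, y - x = (2 : ℝ) • z) :
    4 * m ≤ ⟪x, x⟫_ℝ + ⟪y, y⟫_ℝ :=
  norm_add_norm_ge_four_mul_min_general Λ m hmin x y hx hyx hyx' hcong
end

section
/- Let Λ be a lattice with minimum m in a Euclidean space E, and let x, y ∈ Λ be nonzero vectors with y ≠ x, y ≠ −x, y ≡ x (mod 2), and N(x) + N(y) = 4m. Then the vectors e = (y−x)/2 and f = (y+x)/2 belong to Λ and have norm N(e) = N(f) = m (i.e. they are minimal vectors of Λ), and ⟨x,y⟩ = 0. -/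
open scoped InnerProductSpace

/-! Write `e = (y - x)/2` and `f = (y + x)/2`. If `y - x = 2z` with `z ∈ Λ`, then `e = z` and
`f = z + x` lie in `Λ`, and they are nonzero because `y ≠ ±x`, so `N(e), N(f) ≥ m`. The
parallelogram law gives `N(e) + N(f) = (N(x) + N(y))/2 = 2m`, which forces `N(e) = N(f) = m`;
finally `N(f) - N(e) = ⟨x, y⟩`. -/

section HalfSumHalfDiff

variable {V : Type*} [AddCommGroup V] [Module ℝ V]

lemma inv_two_smul_sub_eq {x y z : V} (h : y - x = (2 : ℝ) • z) :
    (2 : ℝ)⁻¹ • (y - x) = z := by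
  rw [h, smul_smul, inv_mul_cancel₀ two_ne_zero, one_smul]

lemma inv_two_smul_add_eq {x y z : V} (h : y - x = (2 : ℝ) • z) :
    (2 : ℝ)⁻¹ • (y + x) = z + x := by
  rw [← inv_two_smul_sub_eq h]
  module

lemma inv_two_smul_sub_ne_zero {x y : V} (h : y ≠ x) : (2 : ℝ)⁻¹ • (y - x) ≠ 0 :=
  smul_ne_zero (by norm_num) (sub_ne_zero.2 h)

lemma inv_two_smul_add_ne_zero {x y : V} (h : y ≠ -x) : (2 : ℝ)⁻¹ • (y + x) ≠ 0 :=
  smul_ne_zero (by norm_num) fun hyx => h (eq_neg_of_add_eq_zero_left hyx)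

end HalfSumHalfDiff

section InnerHalves

variable {E : Type*} [NormedAddCommGroup E] [InnerProductSpace ℝ E]

lemma inner_self_inv_two_smul (v : E) :
    ⟪(2 : ℝ)⁻¹ • v, (2 : ℝ)⁻¹ • v⟫_ℝ = ⟪v, v⟫_ℝ / 4 := by
  rw [real_inner_smul_left, real_inner_smul_right]
  ring

lemma inner_self_half_sub_add_inner_self_half_add (x y : E) :
    ⟪(2 : ℝ)⁻¹ • (y - x), (2 : ℝ)⁻¹ • (y - x)⟫_ℝ +
        ⟪(2 : ℝ)⁻¹ • (y + x), (2 : ℝ)⁻¹ • (y + x)⟫_ℝ = (⟪x, x⟫_ℝ + ⟪y, y⟫_ℝ) / 2 := by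
  rw [inner_self_inv_two_smul, inner_self_inv_two_smul, add_comm ⟪x, x⟫_ℝ]
  linarith [parallelogram_law (𝕜 := ℝ) (x := y) (y := x)]

lemma inner_self_half_add_sub_inner_self_half_sub (x y : E) :
    ⟪(2 : ℝ)⁻¹ • (y + x), (2 : ℝ)⁻¹ • (y + x)⟫_ℝ -
        ⟪(2 : ℝ)⁻¹ • (y - x), (2 : ℝ)⁻¹ • (y - x)⟫_ℝ = ⟪x, y⟫_ℝ := by
  rw [inner_self_inv_two_smul, inner_self_inv_two_smul, real_inner_add_add_self,
    real_inner_sub_sub_self, real_inner_comm y x]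
  ring

end InnerHalves

theorem half_sum_half_diff_minimal_general
    {E : Type*} [NormedAddCommGroup E] [InnerProductSpace ℝ E]
    (Λ : AddSubgroup E) (m : ℝ)
    (hmin : IsLeast {r : ℝ | ∃ x ∈ Λ, x ≠ 0 ∧ ⟪x, x⟫_ℝ = r} m)
    (x y : E) (hx : x ∈ Λ)
    (hyx : y ≠ x) (hyx' : y ≠ -x)
    (hcong : ∃ z ∈ Λ, y - x = (2 : ℝ) • z)
    (hsum : ⟪x, x⟫_ℝ + ⟪y, y⟫_ℝ = 4 * m) :
    (2 : ℝ)⁻¹ • (y - x) ∈ Λ ∧ (2 : ℝ)⁻¹ • (y + x) ∈ Λ ∧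
      ⟪(2 : ℝ)⁻¹ • (y - x), (2 : ℝ)⁻¹ • (y - x)⟫_ℝ = m ∧
      ⟪(2 : ℝ)⁻¹ • (y + x), (2 : ℝ)⁻¹ • (y + x)⟫_ℝ = m ∧
      ⟪x, y⟫_ℝ = 0 := by
  obtain ⟨z, hz, hyxz⟩ := hcong
  have he : (2 : ℝ)⁻¹ • (y - x) ∈ Λ := inv_two_smul_sub_eq hyxz ▸ hz
  have hf : (2 : ℝ)⁻¹ • (y + x) ∈ Λ := inv_two_smul_add_eq hyxz ▸ Λ.add_mem hz hx
  have hme := hmin.2 ⟨_, he, inv_two_smul_sub_ne_zero hyx, rfl⟩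
  have hmf := hmin.2 ⟨_, hf, inv_two_smul_add_ne_zero hyx', rfl⟩
  have hsum' := inner_self_half_sub_add_inner_self_half_add x y
  have hdiff := inner_self_half_add_sub_inner_self_half_sub x y
  refine ⟨he, hf, ?_, ?_, ?_⟩ <;> linarith

/-- Let `Λ` be a lattice with minimum `m`, and let `x, y ∈ Λ` be nonzero
with `y ≠ ±x`, `y ≡ x (mod 2)` and `N(x) + N(y) = 4m`. Then `e = (y−x)/2` and
`f = (y+x)/2` belong to `Λ`, are minimal vectors (`N(e) = N(f) = m`), and `⟨x,y⟩ = 0`. -/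
theorem half_sum_half_diff_minimal
    {E : Type*} [NormedAddCommGroup E] [InnerProductSpace ℝ E] [FiniteDimensional ℝ E]
    (Λ : AddSubgroup E) (hdisc : DiscreteTopology Λ) (m : ℝ)
    (hmin : IsLeast {r : ℝ | ∃ x ∈ Λ, x ≠ 0 ∧ ⟪x, x⟫_ℝ = r} m)
    (x y : E) (hx : x ∈ Λ) (hy : y ∈ Λ)
    (hx0 : x ≠ 0) (hy0 : y ≠ 0) (hyx : y ≠ x) (hyx' : y ≠ -x)
    (hcong : ∃ z ∈ Λ, y - x = (2 : ℝ) • z)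
    (hsum : ⟪x, x⟫_ℝ + ⟪y, y⟫_ℝ = 4 * m) :
    (2 : ℝ)⁻¹ • (y - x) ∈ Λ ∧ (2 : ℝ)⁻¹ • (y + x) ∈ Λ ∧
      ⟪(2 : ℝ)⁻¹ • (y - x), (2 : ℝ)⁻¹ • (y - x)⟫_ℝ = m ∧
      ⟪(2 : ℝ)⁻¹ • (y + x), (2 : ℝ)⁻¹ • (y + x)⟫_ℝ = m ∧
      ⟪x, y⟫_ℝ = 0 :=
  half_sum_half_diff_minimal_general Λ m hmin x y hx hyx hyx' hcong hsum
end

section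
/- Let Λ be a lattice with minimum m in a Euclidean space E, let m′ ≥ m and m″ ≥ m′, and let x, y, y′ ∈ Λ with N(x) = m′, N(y) = N(y′) = m″, y ≡ x (mod 2), y′ ≡ x (mod 2), and y′ ≠ y, y′ ≠ −y. Then |⟨y, y′⟩| ≤ m″ − 2m. -/
open scoped InnerProductSpace

/-- Proposition 1.3. Let `Λ` be a lattice with minimum `m`, let
`m ≤ m'` and `m' ≤ m''`, and let `x, y, y' ∈ Λ` with `N(x) = m'`, `N(y) = N(y') = m''`,
`y ≡ y' ≡ x (mod 2)` and `y' ≠ ±y`. Then `|⟨y, y'⟩| ≤ m'' − 2m`. -/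
theorem abs_inner_le_of_congr
    {E : Type*} [NormedAddCommGroup E] [InnerProductSpace ℝ E] [FiniteDimensional ℝ E]
    (Λ : AddSubgroup E) (hdisc : DiscreteTopology Λ) (m m' m'' : ℝ)
    (hmin : IsLeast {r : ℝ | ∃ x ∈ Λ, x ≠ 0 ∧ ⟪x, x⟫_ℝ = r} m)
    (hm' : m ≤ m') (hm'' : m' ≤ m'')
    (x y y' : E) (hx : x ∈ Λ) (hy : y ∈ Λ) (hy' : y' ∈ Λ)
    (hxN : ⟪x, x⟫_ℝ = m') (hyN : ⟪y, y⟫_ℝ = m'') (hy'N : ⟪y', y'⟫_ℝ = m'')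
    (hcongy : ∃ z ∈ Λ, y - x = (2 : ℝ) • z)
    (hcongy' : ∃ z ∈ Λ, y' - x = (2 : ℝ) • z)
    (hne : y' ≠ y) (hne' : y' ≠ -y) :
    |⟪y, y'⟫_ℝ| ≤ m'' - 2 * m := by
  obtain ⟨z, hz, hzeq⟩ := hcongy
  obtain ⟨z', hz', hz'eq⟩ := hcongy'
  -- (y - y')/2 = z - z' ∈ Λ
  have hsub : y - y' = (2 : ℝ) • (z - z') := by
    have : y - y' = (y - x) - (y' - x) := by abel
    rw [this, hzeq, hz'eq, smul_sub]
  have hadd : y + y' = (2 : ℝ) • (z + z' + x) := by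
    have : y + y' = (y - x) + (y' - x) + (2 : ℝ) • x := by
      rw [two_smul]; abel
    rw [this, hzeq, hz'eq]; rw [smul_add, smul_add]
  have hzz1 : z - z' ≠ 0 := by
    intro h
    apply hne
    have : y - y' = 0 := by rw [hsub, h, smul_zero]
    linear_combination (norm := abel) -this
  have hzz2 : z + z' + x ≠ 0 := by
    intro h
    apply hne'
    have : y + y' = 0 := by rw [hadd, h, smul_zero]
    linear_combination (norm := abel) this
  have h1 : m ≤ ⟪z - z', z - z'⟫_ℝ :=
    hmin.2 ⟨z - z', sub_mem hz hz', hzz1, rfl⟩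
  have h2 : m ≤ ⟪z + z' + x, z + z' + x⟫_ℝ :=
    hmin.2 ⟨z + z' + x, add_mem (add_mem hz hz') hx, hzz2, rfl⟩
  have e1 : ⟪y - y', y - y'⟫_ℝ = (4 : ℝ) * ⟪z - z', z - z'⟫_ℝ := by
    rw [hsub, real_inner_smul_left, real_inner_smul_right]; ring
  have e2 : ⟪y + y', y + y'⟫_ℝ = (4 : ℝ) * ⟪z + z' + x, z + z' + x⟫_ℝ := by
    rw [hadd, real_inner_smul_left, real_inner_smul_right]; ring
  have ex1 : ⟪y - y', y - y'⟫_ℝ = m'' - 2 * ⟪y, y'⟫_ℝ + m'' := by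
    rw [inner_sub_sub_self, hyN, hy'N, real_inner_comm y' y]; ring
  have ex2 : ⟪y + y', y + y'⟫_ℝ = m'' + 2 * ⟪y, y'⟫_ℝ + m'' := by
    rw [inner_add_add_self, hyN, hy'N, real_inner_comm y' y]; ring
  rw [abs_le]
  constructor <;> nlinarith [h1, h2, e1, e2, ex1, ex2]
end

section
/- Let Λ be an integral lattice in a Euclidean space E whose minimum m is even, and let x₀ ∈ Λ with N(x₀) = 2m − 2. Let 𝓔(x₀, 2m+2) = {y ∈ Λ : N(y) = 2m+2 and y ≡ x₀ (mod 2)}. Then every y ∈ 𝓔(x₀, 2m+2) satisfies ⟨y, x₀⟩ = 0, and for any y, y′ ∈ 𝓔(x₀, 2m+2) with y′ ≠ y and y′ ≠ −y one has ⟨y, y′⟩ = 2 or ⟨y, y′⟩ = −2. -/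
/-!
If `y ≡ y' (mod 2Λ)` and `y' ≠ ±y`, then `u = (y - y')/2` and `v = (y + y')/2` are nonzero vectors
of `Λ`, so both have norm at least `m`. Since `N u + N v = (N y + N y')/2` and `N v - N u = ⟪y, y'⟫`,
this gives `|⟪y, y'⟫| ≤ (N y + N y')/2 - 2m`. For `y` and `x₀` the bound is `0`; for two vectors
of `𝓔(x₀, 2m+2)` it is `2`, and orthogonality to `x₀` together with `m` even forces
`⟪y, y'⟫ ≡ 2 (mod 4)`.
-/

open scoped InnerProductSpace

section

variable {E : Type*} [NormedAddCommGroup E] [InnerProductSpace ℝ E]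

theorem abs_inner_le_of_sub_eq_two_smul {Λ : AddSubgroup E} {m : ℝ}
    (hmin : ∀ z ∈ Λ, z ≠ 0 → m ≤ ⟪z, z⟫_ℝ) {y y' c : E} (hy' : y' ∈ Λ) (hc : c ∈ Λ)
    (hyc : y - y' = (2 : ℝ) • c) (hne : y' ≠ y) (hne' : y' ≠ -y) :
    |⟪y, y'⟫_ℝ| ≤ (⟪y, y⟫_ℝ + ⟪y', y'⟫_ℝ) / 2 - 2 * m := by
  obtain rfl : y = (2 : ℝ) • c + y' := sub_eq_iff_eq_add.mp hyc
  have hu : m ≤ ⟪c, c⟫_ℝ := hmin c hc fun h => hne (by simp [h])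
  have hv : m ≤ ⟪y' + c, y' + c⟫_ℝ := hmin _ (Λ.add_mem hy' hc) fun h => hne' <| by
    rw [show (2 : ℝ) • c + y' = (2 : ℝ) • (y' + c) - y' by module, h]
    simp
  simp only [inner_add_left, inner_add_right, real_inner_smul_left, real_inner_smul_right,
    real_inner_comm c y'] at hv ⊢
  rw [abs_le]
  constructor <;> linarith

theorem inner_eq_four_mul_inner_sub_of_inner_eq_zero {x y y' a b : E}
    (hya : y - x = (2 : ℝ) • a) (hy'b : y' - x = (2 : ℝ) • b)
    (hy : ⟪y, x⟫_ℝ = 0) (hy' : ⟪y', x⟫_ℝ = 0) :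
    ⟪y, y'⟫_ℝ = 4 * ⟪a, b⟫_ℝ - ⟪x, x⟫_ℝ := by
  obtain rfl : y = (2 : ℝ) • a + x := sub_eq_iff_eq_add.mp hya
  obtain rfl : y' = (2 : ℝ) • b + x := sub_eq_iff_eq_add.mp hy'b
  simp only [inner_add_left, inner_add_right, real_inner_smul_left, real_inner_smul_right,
    real_inner_comm b x] at hy hy' ⊢
  linarith

end

theorem eq_two_or_eq_neg_two_of_abs_le_two {t : ℝ} {j : ℤ} (ht : t = 4 * j + 2) (h : |t| ≤ 2) :
    t = 2 ∨ t = -2 := by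
  obtain ⟨hlo, hhi⟩ := abs_le.mp h
  have hj : (-1 : ℤ) ≤ j ∧ j ≤ 0 := by
    constructor <;> · rw [← Int.cast_le (R := ℝ)]; push_cast; linarith
  obtain rfl | rfl : j = 0 ∨ j = -1 := by omega
  · left; simpa using ht
  · right; norm_num [ht]

theorem inner_eq_two_or_neg_two_on_E_general
    {E : Type*} [NormedAddCommGroup E] [InnerProductSpace ℝ E]
    (Λ : AddSubgroup E) (m : ℝ)
    (hmin : IsLeast {r : ℝ | ∃ x ∈ Λ, x ≠ 0 ∧ ⟪x, x⟫_ℝ = r} m)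
    (hintegral : ∀ x ∈ Λ, ∀ y ∈ Λ, ∃ k : ℤ, ⟪x, y⟫_ℝ = (k : ℝ))
    (hmeven : ∃ k : ℤ, m = 2 * (k : ℝ))
    (x₀ : E) (hx₀ : x₀ ∈ Λ) (hx₀N : ⟪x₀, x₀⟫_ℝ = 2 * m - 2) :
    (∀ y ∈ Λ, ⟪y, y⟫_ℝ = 2 * m + 2 → (∃ z ∈ Λ, y - x₀ = (2 : ℝ) • z) →
        ⟪y, x₀⟫_ℝ = 0) ∧
    (∀ y ∈ Λ, ∀ y' ∈ Λ, ⟪y, y⟫_ℝ = 2 * m + 2 → ⟪y', y'⟫_ℝ = 2 * m + 2 →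
        (∃ z ∈ Λ, y - x₀ = (2 : ℝ) • z) → (∃ z ∈ Λ, y' - x₀ = (2 : ℝ) • z) →
        y' ≠ y → y' ≠ -y → (⟪y, y'⟫_ℝ = 2 ∨ ⟪y, y'⟫_ℝ = -2)) := by
  have hle : ∀ z ∈ Λ, z ≠ 0 → m ≤ ⟪z, z⟫_ℝ := fun z hz h0 => hmin.2 ⟨z, hz, h0, rfl⟩
  have horth : ∀ y ∈ Λ, ⟪y, y⟫_ℝ = 2 * m + 2 → (∃ z ∈ Λ, y - x₀ = (2 : ℝ) • z) →
      ⟪y, x₀⟫_ℝ = 0 := by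
    rintro y - hyN ⟨z, hz, hyz⟩
    have hne : x₀ ≠ y := by rintro rfl; linarith
    have hne' : x₀ ≠ -y := by rintro rfl; rw [inner_neg_neg] at hx₀N; linarith
    have hbound := abs_inner_le_of_sub_eq_two_smul hle hx₀ hz hyz hne hne'
    rw [hyN, hx₀N] at hbound
    exact abs_nonpos_iff.mp (by linarith)
  refine ⟨horth, ?_⟩
  rintro y hy y' hy' hyN hy'N ⟨a, ha, hya⟩ ⟨b, hb, hy'b⟩ hne hne'
  have hyy' : y - y' = (2 : ℝ) • (a - b) := by
    rw [← sub_sub_sub_cancel_right y y' x₀, hya, hy'b, smul_sub]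
  have hbound := abs_inner_le_of_sub_eq_two_smul hle hy' (Λ.sub_mem ha hb) hyy' hne hne'
  have hval := inner_eq_four_mul_inner_sub_of_inner_eq_zero hya hy'b
    (horth y hy hyN ⟨a, ha, hya⟩) (horth y' hy' hy'N ⟨b, hb, hy'b⟩)
  obtain ⟨k, hk⟩ := hintegral a ha b hb
  obtain ⟨l, rfl⟩ := hmeven
  refine eq_two_or_eq_neg_two_of_abs_le_two (j := k - l) ?_ ?_
  · rw [hval, hk, hx₀N]; push_cast; ring
  · rw [hyN, hy'N] at hbound; linarith

/-- Let `Λ` be an integral lattice with even minimum `m`, and let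
`x₀ ∈ Λ` with `N(x₀) = 2m − 2`. Every `y` of norm `2m+2` congruent to `x₀` mod `2`
is orthogonal to `x₀`, and two such `y, y'` with `y' ≠ ±y` satisfy `⟨y, y'⟩ = ±2`. -/
theorem inner_eq_two_or_neg_two_on_E
    {E : Type*} [NormedAddCommGroup E] [InnerProductSpace ℝ E] [FiniteDimensional ℝ E]
    (Λ : AddSubgroup E) (hdisc : DiscreteTopology Λ) (m : ℝ)
    (hmin : IsLeast {r : ℝ | ∃ x ∈ Λ, x ≠ 0 ∧ ⟪x, x⟫_ℝ = r} m)
    (hintegral : ∀ x ∈ Λ, ∀ y ∈ Λ, ∃ k : ℤ, ⟪x, y⟫_ℝ = (k : ℝ))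
    (hmeven : ∃ k : ℤ, m = 2 * (k : ℝ))
    (x₀ : E) (hx₀ : x₀ ∈ Λ) (hx₀N : ⟪x₀, x₀⟫_ℝ = 2 * m - 2) :
    (∀ y ∈ Λ, ⟪y, y⟫_ℝ = 2 * m + 2 → (∃ z ∈ Λ, y - x₀ = (2 : ℝ) • z) →
        ⟪y, x₀⟫_ℝ = 0) ∧
    (∀ y ∈ Λ, ∀ y' ∈ Λ, ⟪y, y⟫_ℝ = 2 * m + 2 → ⟪y', y'⟫_ℝ = 2 * m + 2 →
        (∃ z ∈ Λ, y - x₀ = (2 : ℝ) • z) → (∃ z ∈ Λ, y' - x₀ = (2 : ℝ) • z) →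
        y' ≠ y → y' ≠ -y → (⟪y, y'⟫_ℝ = 2 ∨ ⟪y, y'⟫_ℝ = -2)) :=
  inner_eq_two_or_neg_two_on_E_general Λ m hmin hintegral hmeven x₀ hx₀ hx₀N
end

section
/- Let Λ be an integral lattice in an n-dimensional Euclidean space E whose minimum m is even, and let x₀ ∈ Λ with N(x₀) = 2m − 2. Let 𝓔(x₀, 2m+2) = {y ∈ Λ : N(y) = 2m+2 and y ≡ x₀ (mod 2)}. Then the lines ℝy, for y ∈ 𝓔(x₀, 2m+2), form an equiangular family of lines with common angle arccos(1/(m+1)); precisely: for any y, y′ ∈ 𝓔(x₀, 2m+2) with y′ ≠ ±y one has ℝy ≠ ℝy′ and |⟨y, y′⟩| / (‖y‖·‖y′‖) = 1/(m+1); moreover all these lines are contained in the hyperplane x₀^⊥, so the family has rank at most n − 1. -/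
open scoped InnerProductSpace

/-- Theorem 1.4. Let `Λ` be an integral lattice with even minimum `m`
in an `n`-dimensional Euclidean space, and `x₀ ∈ Λ` with `N(x₀) = 2m − 2`. Then the
lines `ℝy`, for `y ∈ 𝓔(x₀, 2m+2) = {y ∈ Λ | N(y) = 2m+2, y ≡ x₀ (mod 2)}`, form an
equiangular family with common angle `arccos (1/(m+1))`: distinct members span
distinct lines with `|⟨y,y'⟩|/(‖y‖‖y'‖) = 1/(m+1)`; all lie in `x₀^⊥`, so the family
has rank at most `n − 1`. -/
theorem equiangular_family_from_even_lattice
    {E : Type*} [NormedAddCommGroup E] [InnerProductSpace ℝ E] [FiniteDimensional ℝ E]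
    (n : ℕ) (hn : Module.finrank ℝ E = n)
    (Λ : AddSubgroup E) (hdisc : DiscreteTopology Λ) (m : ℝ)
    (hmin : IsLeast {r : ℝ | ∃ x ∈ Λ, x ≠ 0 ∧ ⟪x, x⟫_ℝ = r} m)
    (hintegral : ∀ x ∈ Λ, ∀ y ∈ Λ, ∃ k : ℤ, ⟪x, y⟫_ℝ = (k : ℝ))
    (hmeven : ∃ k : ℤ, m = 2 * (k : ℝ))
    (x₀ : E) (hx₀ : x₀ ∈ Λ) (hx₀N : ⟪x₀, x₀⟫_ℝ = 2 * m - 2)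
    (𝓔 : Set E)
    (h𝓔 : 𝓔 = {y : E | y ∈ Λ ∧ ⟪y, y⟫_ℝ = 2 * m + 2 ∧ ∃ z ∈ Λ, y - x₀ = (2 : ℝ) • z}) :
    (∀ y ∈ 𝓔, ∀ y' ∈ 𝓔, y' ≠ y → y' ≠ -y →
        Submodule.span ℝ {y} ≠ Submodule.span ℝ {y'} ∧
        |⟪y, y'⟫_ℝ| / (‖y‖ * ‖y'‖) = 1 / (m + 1)) ∧
    (∀ y ∈ 𝓔, ⟪y, x₀⟫_ℝ = 0) ∧
    Module.finrank ℝ (Submodule.span ℝ 𝓔) ≤ n - 1 := by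
  obtain ⟨⟨xm, hxmΛ, hxm0, hxmN⟩, hlb⟩ := hmin
  have hmpos : 0 < m := by
    rw [← hxmN, real_inner_self_eq_norm_mul_norm]
    have h0 : 0 < ‖xm‖ := norm_pos_iff.mpr hxm0
    positivity
  have hbound : ∀ w : E, w ∈ Λ → w ≠ 0 → m ≤ ⟪w, w⟫_ℝ :=
    fun w hw hw0 => hlb ⟨w, hw, hw0, rfl⟩
  obtain ⟨j, hj⟩ := hmeven
  have hm2 : 2 ≤ m := by
    have h0 : (0:ℝ) < (j:ℝ) := by linarith
    have h1 : (0:ℤ) < j := by exact_mod_cast h0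
    have h2 : (1:ℝ) ≤ (j:ℝ) := by exact_mod_cast h1
    linarith
  -- All members of 𝓔 are orthogonal to x₀.
  have hperp : ∀ y ∈ 𝓔, ⟪y, x₀⟫_ℝ = 0 := by
    intro y hy
    rw [h𝓔] at hy
    obtain ⟨hyΛ, hyN, z, hzΛ, hz⟩ := hy
    have hy_eq : y = (2:ℝ) • z + x₀ := by rw [← hz]; abel
    set t := ⟪y, x₀⟫_ℝ with ht
    have hzz : 4 * ⟪z, z⟫_ℝ = 4*m - 2*t := by
      have e1 : ⟪y - x₀, y - x₀⟫_ℝ = 4 * ⟪z, z⟫_ℝ := by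
        rw [hz, real_inner_smul_left, real_inner_smul_right]; ring
      have e2 : ⟪y - x₀, y - x₀⟫_ℝ = (2*m+2) - 2*t + (2*m-2) := by
        rw [real_inner_sub_sub_self, hyN, hx₀N]
      linarith
    have hzx : 2 * ⟪z, x₀⟫_ℝ = t - (2*m-2) := by
      have e1 : ⟪y - x₀, x₀⟫_ℝ = 2 * ⟪z, x₀⟫_ℝ := by
        rw [hz, real_inner_smul_left]
      have e2 : ⟪y - x₀, x₀⟫_ℝ = t - (2*m-2) := by
        rw [inner_sub_left, hx₀N]
      linarith
    have hz0 : z ≠ 0 := by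
      rintro rfl
      have hyx : y = x₀ := by
        have := hz; rw [smul_zero, sub_eq_zero] at this; exact this
      rw [hyx, hx₀N] at hyN; linarith
    have hzx0 : z + x₀ ≠ 0 := by
      intro h
      have hzval : z = -x₀ := by
        have := eq_neg_of_add_eq_zero_left h; exact this
      have hyx : y = -x₀ := by rw [hy_eq, hzval]; module
      rw [hyx, inner_neg_neg, hx₀N] at hyN; linarith
    have b1 := hbound z hzΛ hz0
    have b2 := hbound (z + x₀) (Λ.add_mem hzΛ hx₀) hzx0
    have hzx2 : ⟪z + x₀, z + x₀⟫_ℝ = ⟪z,z⟫_ℝ + 2*⟪z,x₀⟫_ℝ + (2*m-2) := by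
      rw [real_inner_add_add_self, hx₀N]
    linarith
  have hx₀ne : x₀ ≠ 0 := by
    intro h
    rw [h, inner_zero_left] at hx₀N; linarith
  refine ⟨?_, hperp, ?_⟩
  · intro y hy y' hy' hne hnegne
    have hty := hperp y hy
    have hty' := hperp y' hy'
    rw [h𝓔] at hy hy'
    obtain ⟨hyΛ, hyN, z, hzΛ, hz⟩ := hy
    obtain ⟨hy'Λ, hy'N, z', hz'Λ, hz'⟩ := hy'
    have hy_eq : y = (2:ℝ) • z + x₀ := by rw [← hz]; abel
    have hy'_eq : y' = (2:ℝ) • z' + x₀ := by rw [← hz']; abel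
    set s := ⟪y, y'⟫_ℝ with hs
    -- bounds on s
    have hweq : y - y' = (2:ℝ) • (z - z') := by rw [hy_eq, hy'_eq]; module
    have hw'eq : y + y' = (2:ℝ) • (z + z' + x₀) := by rw [hy_eq, hy'_eq]; module
    have hw0 : z - z' ≠ 0 := by
      intro h
      apply hne
      have : y - y' = 0 := by rw [hweq, h, smul_zero]
      rw [sub_eq_zero] at this; exact this.symm
    have hw'0 : z + z' + x₀ ≠ 0 := by
      intro h
      apply hnegne
      have : y + y' = 0 := by rw [hw'eq, h, smul_zero]
      exact eq_neg_of_add_eq_zero_right this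
    have b1 := hbound (z - z') (Λ.sub_mem hzΛ hz'Λ) hw0
    have b2 := hbound (z + z' + x₀) (Λ.add_mem (Λ.add_mem hzΛ hz'Λ) hx₀) hw'0
    have e1 : 4 * ⟪z - z', z - z'⟫_ℝ = (2*m+2) - 2*s + (2*m+2) := by
      have f1 : ⟪y - y', y - y'⟫_ℝ = 4 * ⟪z - z', z - z'⟫_ℝ := by
        rw [hweq, real_inner_smul_left, real_inner_smul_right]; ring
      have f2 : ⟪y - y', y - y'⟫_ℝ = (2*m+2) - 2*s + (2*m+2) := by
        rw [real_inner_sub_sub_self, hyN, hy'N]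
      linarith
    have e2 : 4 * ⟪z + z' + x₀, z + z' + x₀⟫_ℝ = (2*m+2) + 2*s + (2*m+2) := by
      have f1 : ⟪y + y', y + y'⟫_ℝ = 4 * ⟪z + z' + x₀, z + z' + x₀⟫_ℝ := by
        rw [hw'eq, real_inner_smul_left, real_inner_smul_right]; ring
      have f2 : ⟪y + y', y + y'⟫_ℝ = (2*m+2) + 2*s + (2*m+2) := by
        rw [real_inner_add_add_self, hyN, hy'N]
      linarith
    have hsub : -2 ≤ s ∧ s ≤ 2 := ⟨by linarith, by linarith⟩
    -- integrality
    obtain ⟨k, hk⟩ := hintegral (z + x₀) (Λ.add_mem hzΛ hx₀) (z' + x₀) (Λ.add_mem hz'Λ hx₀)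
    have h4k : 4 * (k:ℝ) = s + 2*m - 2 := by
      have g1 : ⟪y + x₀, y' + x₀⟫_ℝ = 4 * ⟪z + x₀, z' + x₀⟫_ℝ := by
        rw [show y + x₀ = (2:ℝ) • (z + x₀) from by rw [hy_eq]; module,
            show y' + x₀ = (2:ℝ) • (z' + x₀) from by rw [hy'_eq]; module,
            real_inner_smul_left, real_inner_smul_right]; ring
      have g2 : ⟪y + x₀, y' + x₀⟫_ℝ = s + 2*m - 2 := by
        simp only [inner_add_left, inner_add_right]
        rw [hty, hx₀N, real_inner_comm y' x₀, hty', ← hs]; ring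
      rw [hk] at g1
      linarith
    -- s = ±2
    have hs2 : s = 2 ∨ s = -2 := by
      have hd1 : (-1:ℝ) ≤ ((k - j : ℤ) : ℝ) := by push_cast; linarith
      have hd2 : ((k - j : ℤ) : ℝ) ≤ 0 := by push_cast; linarith
      have hd1' : (-1:ℤ) ≤ k - j := by exact_mod_cast hd1
      have hd2' : k - j ≤ 0 := by exact_mod_cast hd2
      have : k - j = -1 ∨ k - j = 0 := by omega
      rcases this with h | h
      · right
        have : (k:ℝ) = (j:ℝ) - 1 := by
          have := congrArg (fun x : ℤ => (x:ℝ)) h; push_cast at this; linarith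
        linarith
      · left
        have : (k:ℝ) = (j:ℝ) := by
          have := congrArg (fun x : ℤ => (x:ℝ)) h; push_cast at this; linarith
        linarith
    -- norms
    have hny : ‖y‖ = Real.sqrt (2*m+2) := by
      rw [← hyN, real_inner_self_eq_norm_mul_norm]
      exact (Real.sqrt_mul_self (norm_nonneg y)).symm
    have hny' : ‖y'‖ = Real.sqrt (2*m+2) := by
      rw [← hy'N, real_inner_self_eq_norm_mul_norm]
      exact (Real.sqrt_mul_self (norm_nonneg y')).symm
    have hprod : ‖y‖ * ‖y'‖ = 2*m+2 := by
      rw [hny, hny']; exact Real.mul_self_sqrt (by linarith)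
    constructor
    · intro hspan
      have hy'mem : y' ∈ Submodule.span ℝ ({y} : Set E) := by
        rw [hspan]; exact Submodule.mem_span_singleton_self y'
      obtain ⟨c, hc⟩ := Submodule.mem_span_singleton.mp hy'mem
      have hcc : ⟪y', y'⟫_ℝ = c^2 * (2*m+2) := by
        rw [← hc, real_inner_smul_left, real_inner_smul_right, hyN]; ring
      rw [hy'N] at hcc
      have hc2 : (c - 1) * (c + 1) = 0 := by nlinarith
      rcases mul_eq_zero.mp hc2 with h | h
      · apply hne
        have : c = 1 := by linarith
        rw [← hc, this, one_smul]
      · apply hnegne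
        have : c = -1 := by linarith
        rw [← hc, this, neg_one_smul]
    · rw [hprod]
      have hm1 : m + 1 ≠ 0 := by linarith
      rcases hs2 with h | h <;> rw [h]
      · rw [abs_of_nonneg (by norm_num : (0:ℝ) ≤ 2)]
        field_simp
      · rw [abs_of_nonpos (by norm_num : (-2:ℝ) ≤ 0)]
        field_simp
  · have hle : Submodule.span ℝ 𝓔 ≤ (Submodule.span ℝ ({x₀} : Set E))ᗮ := by
      rw [Submodule.span_le]
      intro y hy
      rw [SetLike.mem_coe, Submodule.mem_orthogonal]
      intro u hu
      obtain ⟨c, hc⟩ := Submodule.mem_span_singleton.mp hu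
      rw [← hc, real_inner_smul_left, real_inner_comm y x₀, hperp y hy, mul_zero]
    have h1 : Module.finrank ℝ (Submodule.span ℝ ({x₀} : Set E)) = 1 :=
      finrank_span_singleton hx₀ne
    have h2 : Module.finrank ℝ (Submodule.span ℝ ({x₀} : Set E)) +
        Module.finrank ℝ (Submodule.span ℝ ({x₀} : Set E))ᗮ = n := by
      rw [← hn]; exact Submodule.finrank_add_finrank_orthogonal _
    have h3 := Submodule.finrank_mono hle
    omega
end

section
/- Let Λ be an integral lattice in a Euclidean space E whose minimum m is even, let x₀ ∈ Λ with N(x₀) = 2m − 2, let S₀ = {x ∈ Λ : N(x) = m and ⟨x₀, x⟩ = m − 1}, and let 𝓔(x₀, 2m+2) = {y ∈ Λ : N(y) = 2m+2 and y ≡ x₀ (mod 2)}. Then the map x ↦ x₀ − 2x is a bijection from S₀ onto 𝓔(x₀, 2m+2). -/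
/-!
Writing `y = x₀ - 2x`, one has `N(y) = N(x₀) - 4⟨x₀, x⟩ + 4N(x)`, so `N(y) = 2m + 2` says exactly
`N(x) - ⟨x₀, x⟩ = 1`. Then `N(x) + N(x₀ - x) = 2m`, and since `x` and `x₀ - x` are nonzero lattice
vectors, both have norm at least `m`, forcing `N(x) = m`. Finally `y ≡ x₀ (mod 2)` means `y = x₀ - 2x`
for some `x ∈ Λ`, which makes the map onto.
-/

open scoped InnerProductSpace

section

variable {E : Type*} [NormedAddCommGroup E] [InnerProductSpace ℝ E]

lemma real_inner_sub_two_smul_self (x₀ x : E) :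
    ⟪x₀ - (2 : ℝ) • x, x₀ - (2 : ℝ) • x⟫_ℝ = ⟪x₀, x₀⟫_ℝ - 4 * ⟪x₀, x⟫_ℝ + 4 * ⟪x, x⟫_ℝ := by
  simp only [real_inner_sub_sub_self, real_inner_smul_left, real_inner_smul_right]
  ring

lemma sub_two_smul_injective (x₀ : E) : Function.Injective fun x : E => x₀ - (2 : ℝ) • x :=
  (sub_right_injective).comp (smul_right_injective E two_ne_zero)

variable {Λ : AddSubgroup E} {m : ℝ}

lemma real_inner_self_eq_of_add_eq_two_mul
    (hmin : IsLeast {r : ℝ | ∃ x ∈ Λ, x ≠ 0 ∧ ⟪x, x⟫_ℝ = r} m)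
    {a b : E} (ha : a ∈ Λ) (ha₀ : a ≠ 0) (hb : b ∈ Λ) (hb₀ : b ≠ 0)
    (hab : ⟪a, a⟫_ℝ + ⟪b, b⟫_ℝ = 2 * m) : ⟪a, a⟫_ℝ = m := by
  have hma : m ≤ ⟪a, a⟫_ℝ := hmin.2 ⟨a, ha, ha₀, rfl⟩
  have hmb : m ≤ ⟪b, b⟫_ℝ := hmin.2 ⟨b, hb, hb₀, rfl⟩
  linarith

lemma real_inner_self_eq_min_of_real_inner_sub_two_smul_self
    (hmin : IsLeast {r : ℝ | ∃ x ∈ Λ, x ≠ 0 ∧ ⟪x, x⟫_ℝ = r} m)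
    {x₀ x : E} (hx₀ : x₀ ∈ Λ) (hx₀N : ⟪x₀, x₀⟫_ℝ = 2 * m - 2) (hx : x ∈ Λ)
    (hy : ⟪x₀ - (2 : ℝ) • x, x₀ - (2 : ℝ) • x⟫_ℝ = 2 * m + 2) :
    ⟪x, x⟫_ℝ = m ∧ ⟪x₀, x⟫_ℝ = m - 1 := by
  rw [real_inner_sub_two_smul_self, hx₀N] at hy
  have hdiff : ⟪x, x⟫_ℝ - ⟪x₀, x⟫_ℝ = 1 := by linarith
  have hx_ne : x ≠ 0 := by
    rintro rfl
    simp at hdiff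
  have hsub_ne : x₀ - x ≠ 0 := by
    rw [sub_ne_zero]
    rintro rfl
    simp at hdiff
  have hsum : ⟪x, x⟫_ℝ + ⟪x₀ - x, x₀ - x⟫_ℝ = 2 * m := by
    rw [real_inner_sub_sub_self, hx₀N]
    linarith
  have hxN := real_inner_self_eq_of_add_eq_two_mul hmin hx hx_ne (Λ.sub_mem hx₀ hx) hsub_ne hsum
  exact ⟨hxN, by linarith⟩

end

theorem bijOn_S0_E_general
    {E : Type*} [NormedAddCommGroup E] [InnerProductSpace ℝ E]
    (Λ : AddSubgroup E) (m : ℝ)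
    (hmin : IsLeast {r : ℝ | ∃ x ∈ Λ, x ≠ 0 ∧ ⟪x, x⟫_ℝ = r} m)
    (x₀ : E) (hx₀ : x₀ ∈ Λ) (hx₀N : ⟪x₀, x₀⟫_ℝ = 2 * m - 2)
    (S₀ : Set E) (hS₀ : S₀ = {x : E | x ∈ Λ ∧ ⟪x, x⟫_ℝ = m ∧ ⟪x₀, x⟫_ℝ = m - 1})
    (𝓔 : Set E)
    (h𝓔 : 𝓔 = {y : E | y ∈ Λ ∧ ⟪y, y⟫_ℝ = 2 * m + 2 ∧ ∃ z ∈ Λ, y - x₀ = (2 : ℝ) • z}) :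
    Set.BijOn (fun x => x₀ - (2 : ℝ) • x) S₀ 𝓔 := by
  subst hS₀ h𝓔
  refine ⟨?mapsTo, (sub_two_smul_injective x₀).injOn, ?surjOn⟩
  case mapsTo =>
    rintro x ⟨hx, hxN, hx₀x⟩
    have h2x : (2 : ℝ) • x ∈ Λ := by
      rw [two_smul]
      exact Λ.add_mem hx hx
    refine ⟨Λ.sub_mem hx₀ h2x, ?_, -x, Λ.neg_mem hx, ?_⟩
    · rw [real_inner_sub_two_smul_self, hx₀N, hxN, hx₀x]
      ring
    · exact (sub_sub_cancel_left _ _).trans (smul_neg _ _).symm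
  case surjOn =>
    rintro y ⟨-, hyN, z, hz, hyz⟩
    have hy : y = x₀ - (2 : ℝ) • -z := by
      rw [smul_neg, sub_neg_eq_add, ← hyz]
      abel
    rw [hy] at hyN
    exact ⟨-z, ⟨Λ.neg_mem hz, real_inner_self_eq_min_of_real_inner_sub_two_smul_self hmin hx₀ hx₀N
      (Λ.neg_mem hz) hyN⟩, hy.symm⟩

/-- Proposition 1.7, first part. With `Λ` integral of even minimum `m`,
`x₀ ∈ Λ` of norm `2m − 2`, `S₀ = {x ∈ S(Λ) | ⟨x₀, x⟩ = m − 1}` and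
`𝓔(x₀, 2m+2) = {y ∈ Λ | N(y) = 2m+2, y ≡ x₀ (mod 2)}`, the map `x ↦ x₀ − 2x` is a
bijection from `S₀` onto `𝓔(x₀, 2m+2)`. -/
theorem bijOn_S0_E
    {E : Type*} [NormedAddCommGroup E] [InnerProductSpace ℝ E] [FiniteDimensional ℝ E]
    (Λ : AddSubgroup E) (hdisc : DiscreteTopology Λ) (m : ℝ)
    (hmin : IsLeast {r : ℝ | ∃ x ∈ Λ, x ≠ 0 ∧ ⟪x, x⟫_ℝ = r} m)
    (hintegral : ∀ x ∈ Λ, ∀ y ∈ Λ, ∃ k : ℤ, ⟪x, y⟫_ℝ = (k : ℝ))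
    (hmeven : ∃ k : ℤ, m = 2 * (k : ℝ))
    (x₀ : E) (hx₀ : x₀ ∈ Λ) (hx₀N : ⟪x₀, x₀⟫_ℝ = 2 * m - 2)
    (S₀ : Set E) (hS₀ : S₀ = {x : E | x ∈ Λ ∧ ⟪x, x⟫_ℝ = m ∧ ⟪x₀, x⟫_ℝ = m - 1})
    (𝓔 : Set E)
    (h𝓔 : 𝓔 = {y : E | y ∈ Λ ∧ ⟪y, y⟫_ℝ = 2 * m + 2 ∧ ∃ z ∈ Λ, y - x₀ = (2 : ℝ) • z}) :
    Set.BijOn (fun x => x₀ - (2 : ℝ) • x) S₀ 𝓔 :=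
  bijOn_S0_E_general Λ m hmin x₀ hx₀ hx₀N S₀ hS₀ 𝓔 h𝓔
end

section
/- Let Λ be an integral lattice in a Euclidean space E whose minimum m is even, let x₀ ∈ Λ with N(x₀) = 2m − 2, let S₀ = {x ∈ Λ : N(x) = m and ⟨x₀, x⟩ = m − 1}, and let 𝓔(x₀, 2m+2) = {y ∈ Λ : N(y) = 2m+2 and y ≡ x₀ (mod 2)}. Assume 𝓔(x₀, 2m+2) is nonempty. Then the dimension of the ℝ-linear span of 𝓔(x₀, 2m+2) equals the dimension of the ℝ-linear span of S₀ minus 1. -/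
open scoped InnerProductSpace

/-!
Write `y ∈ 𝓔(x₀, 2m+2)` as `y = x₀ + 2z` with `z ∈ Λ`. Expanding the norm gives
`N(z) + ⟨x₀, z⟩ = 1`, hence `N(x₀ + z) = 2m − N(z)`; as `z` and `x₀ + z` are nonzero lattice
vectors, minimality forces `N(z) = m` and `⟨x₀, z⟩ = 1 − m`. Thus `x₀ + z` and `−z` lie in `S₀`,
with sum `x₀` and difference `y`, and `y ⊥ x₀`. Conversely `x ↦ 2x − x₀` maps `S₀` into
`𝓔(x₀, 2m+2)`. So `span S₀ = span 𝓔 ⊕ ℝ x₀`, an orthogonal sum since `N(x₀) = 2m − 2 ≠ 0`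
for even `m`.
-/

theorem notMem_span_of_forall_inner_eq_zero {E : Type*} [NormedAddCommGroup E]
    [InnerProductSpace ℝ E] {s : Set E} {v : E} (hv : v ≠ 0) (h : ∀ y ∈ s, ⟪v, y⟫_ℝ = 0) :
    v ∉ Submodule.span ℝ s := by
  intro hmem
  have hle : Submodule.span ℝ s ≤ (ℝ ∙ v)ᗮ := Submodule.span_le.mpr fun y hy ↦
    Submodule.mem_orthogonal_singleton_iff_inner_right.mpr (h y hy)
  exact hv (inner_self_eq_zero.mp (Submodule.mem_orthogonal_singleton_iff_inner_right.mp
    (hle hmem)))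

namespace AddSubgroup

variable {E : Type*} [NormedAddCommGroup E] [InnerProductSpace ℝ E] (Λ : AddSubgroup E)

/-- The paper's `𝓔(x₀, n)`: the vectors of norm `n` in the class `x₀ + 2Λ`. -/
def evenClassShell (x₀ : E) (n : ℝ) : Set E :=
  {y | y ∈ Λ ∧ ⟪y, y⟫_ℝ = n ∧ ∃ z ∈ Λ, y - x₀ = (2 : ℝ) • z}

def innerShell (x₀ : E) (n c : ℝ) : Set E :=
  {x | x ∈ Λ ∧ ⟪x, x⟫_ℝ = n ∧ ⟪x₀, x⟫_ℝ = c}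

variable {Λ} {m : ℝ} {x₀ : E} (hx₀N : ⟪x₀, x₀⟫_ℝ = 2 * m - 2)
include hx₀N

theorem two_smul_sub_mem_evenClassShell (hx₀ : x₀ ∈ Λ) {x : E}
    (hx : x ∈ Λ.innerShell x₀ m (m - 1)) :
    (2 : ℝ) • x - x₀ ∈ Λ.evenClassShell x₀ (2 * m + 2) := by
  obtain ⟨hxΛ, hxN, hxI⟩ := hx
  refine ⟨?_, ?_, x - x₀, sub_mem hxΛ hx₀, by module⟩
  · rw [two_smul]
    exact sub_mem (add_mem hxΛ hxΛ) hx₀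
  · simp only [inner_sub_sub_self, real_inner_smul_left, real_inner_smul_right,
      real_inner_comm x₀ x, hxN, hx₀N, hxI]
    ring

variable (hmin : IsLeast {r : ℝ | ∃ x ∈ Λ, x ≠ 0 ∧ ⟪x, x⟫_ℝ = r} m) (hx₀ : x₀ ∈ Λ)
include hmin hx₀

theorem inner_self_eq_and_inner_eq_of_inner_add_two_smul {z : E} (hz : z ∈ Λ)
    (hN : ⟪x₀ + (2 : ℝ) • z, x₀ + (2 : ℝ) • z⟫_ℝ = 2 * m + 2) :
    ⟪z, z⟫_ℝ = m ∧ ⟪x₀, z⟫_ℝ = 1 - m := by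
  have hsum : ⟪z, z⟫_ℝ + ⟪x₀, z⟫_ℝ = 1 := by
    simp only [inner_add_add_self, real_inner_smul_left, real_inner_smul_right,
      real_inner_comm x₀ z, hx₀N] at hN
    linarith
  have hz0 : z ≠ 0 := by
    rintro rfl
    rw [smul_zero, add_zero, hx₀N] at hN
    linarith
  have hxz0 : x₀ + z ≠ 0 := by
    intro h
    have hy : x₀ + (2 : ℝ) • z = -x₀ := by rw [eq_neg_of_add_eq_zero_right h]; module
    rw [hy, inner_neg_neg, hx₀N] at hN
    linarith
  have hzm : m ≤ ⟪z, z⟫_ℝ := hmin.2 ⟨z, hz, hz0, rfl⟩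
  have hxzm : m ≤ ⟪x₀ + z, x₀ + z⟫_ℝ := hmin.2 ⟨x₀ + z, add_mem hx₀ hz, hxz0, rfl⟩
  rw [inner_add_add_self, hx₀N, real_inner_comm x₀ z] at hxzm
  constructor <;> linarith

theorem exists_innerShell_of_mem_evenClassShell {y : E}
    (hy : y ∈ Λ.evenClassShell x₀ (2 * m + 2)) :
    ⟪x₀, y⟫_ℝ = 0 ∧ ∃ x ∈ Λ.innerShell x₀ m (m - 1), ∃ x' ∈ Λ.innerShell x₀ m (m - 1),
      x - x' = y ∧ x + x' = x₀ := by
  obtain ⟨-, hyN, z, hz, hyz⟩ := hy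
  obtain rfl : y = x₀ + (2 : ℝ) • z := by rw [← hyz]; abel
  obtain ⟨hzN, hzI⟩ := inner_self_eq_and_inner_eq_of_inner_add_two_smul hx₀N hmin hx₀ hz hyN
  refine ⟨?_, x₀ + z, ⟨add_mem hx₀ hz, ?_, ?_⟩, -z, ⟨neg_mem hz, ?_, ?_⟩, by module, by abel⟩
  · rw [inner_add_right, real_inner_smul_right, hx₀N, hzI]; ring
  · rw [inner_add_add_self, hx₀N, real_inner_comm x₀ z, hzI, hzN]; ring
  · rw [inner_add_right, hx₀N, hzI]; ring
  · rw [inner_neg_neg, hzN]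
  · rw [inner_neg_right, hzI]; ring

theorem span_innerShell_eq_span_evenClassShell_sup
    (hne : (Λ.evenClassShell x₀ (2 * m + 2)).Nonempty) :
    Submodule.span ℝ (Λ.innerShell x₀ m (m - 1)) =
      Submodule.span ℝ (Λ.evenClassShell x₀ (2 * m + 2)) ⊔ ℝ ∙ x₀ := by
  apply le_antisymm
  · refine Submodule.span_le.mpr fun x hx ↦ ?_
    have hx_eq : x = (2⁻¹ : ℝ) • ((2 : ℝ) • x - x₀) + (2⁻¹ : ℝ) • x₀ := by module
    rw [SetLike.mem_coe, hx_eq]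
    exact add_mem (Submodule.smul_mem _ _ (Submodule.mem_sup_left
        (Submodule.subset_span (two_smul_sub_mem_evenClassShell hx₀N hx₀ hx))))
      (Submodule.smul_mem _ _ (Submodule.mem_sup_right (Submodule.mem_span_singleton_self x₀)))
  · refine sup_le (Submodule.span_le.mpr fun y hy ↦ ?_) ?_
    · obtain ⟨-, x, hx, x', hx', rfl, -⟩ :=
        exists_innerShell_of_mem_evenClassShell hx₀N hmin hx₀ hy
      exact sub_mem (Submodule.subset_span hx) (Submodule.subset_span hx')
    · obtain ⟨y, hy⟩ := hne
      obtain ⟨-, x, hx, x', hx', -, hxx'⟩ :=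
        exists_innerShell_of_mem_evenClassShell hx₀N hmin hx₀ hy
      rw [Submodule.span_singleton_le_iff_mem]
      convert add_mem (Submodule.subset_span hx) (Submodule.subset_span hx') using 1
      exact hxx'.symm

end AddSubgroup

theorem rank_E_eq_rank_S0_sub_one_general
    {E : Type*} [NormedAddCommGroup E] [InnerProductSpace ℝ E] [FiniteDimensional ℝ E]
    (Λ : AddSubgroup E) (m : ℝ)
    (hmin : IsLeast {r : ℝ | ∃ x ∈ Λ, x ≠ 0 ∧ ⟪x, x⟫_ℝ = r} m)
    (hmeven : ∃ k : ℤ, m = 2 * (k : ℝ))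
    (x₀ : E) (hx₀ : x₀ ∈ Λ) (hx₀N : ⟪x₀, x₀⟫_ℝ = 2 * m - 2)
    (S₀ : Set E) (hS₀ : S₀ = {x : E | x ∈ Λ ∧ ⟪x, x⟫_ℝ = m ∧ ⟪x₀, x⟫_ℝ = m - 1})
    (𝓔 : Set E)
    (h𝓔 : 𝓔 = {y : E | y ∈ Λ ∧ ⟪y, y⟫_ℝ = 2 * m + 2 ∧ ∃ z ∈ Λ, y - x₀ = (2 : ℝ) • z})
    (hne : 𝓔.Nonempty) :
    Module.finrank ℝ (Submodule.span ℝ 𝓔) = Module.finrank ℝ (Submodule.span ℝ S₀) - 1 := by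
  change S₀ = Λ.innerShell x₀ m (m - 1) at hS₀
  change 𝓔 = Λ.evenClassShell x₀ (2 * m + 2) at h𝓔
  subst hS₀ h𝓔
  have hx₀ne : x₀ ≠ 0 := by
    rintro rfl
    obtain ⟨k, rfl⟩ := hmeven
    rw [inner_zero_left] at hx₀N
    have : (4 * k : ℤ) = 2 := by exact_mod_cast (by linarith : (4 * k : ℝ) = 2)
    omega
  have hx₀_notMem : x₀ ∉ Submodule.span ℝ (Λ.evenClassShell x₀ (2 * m + 2)) :=
    notMem_span_of_forall_inner_eq_zero hx₀ne fun y hy ↦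
      (AddSubgroup.exists_innerShell_of_mem_evenClassShell hx₀N hmin hx₀ hy).1
  rw [AddSubgroup.span_innerShell_eq_span_evenClassShell_sup hx₀N hmin hx₀ hne,
    Submodule.finrank_sup_span_singleton hx₀_notMem, Nat.add_sub_cancel]

/-- Proposition 1.7, second part. With `Λ` integral of even minimum
`m`, `x₀ ∈ Λ` of norm `2m − 2`, `S₀ = {x ∈ S(Λ) | ⟨x₀, x⟩ = m − 1}` and
`𝓔(x₀, 2m+2)` nonempty, we have `rk 𝓔(x₀, 2m+2) = rk S₀ − 1`. -/
theorem rank_E_eq_rank_S0_sub_one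
    {E : Type*} [NormedAddCommGroup E] [InnerProductSpace ℝ E] [FiniteDimensional ℝ E]
    (Λ : AddSubgroup E) (hdisc : DiscreteTopology Λ) (m : ℝ)
    (hmin : IsLeast {r : ℝ | ∃ x ∈ Λ, x ≠ 0 ∧ ⟪x, x⟫_ℝ = r} m)
    (hintegral : ∀ x ∈ Λ, ∀ y ∈ Λ, ∃ k : ℤ, ⟪x, y⟫_ℝ = (k : ℝ))
    (hmeven : ∃ k : ℤ, m = 2 * (k : ℝ))
    (x₀ : E) (hx₀ : x₀ ∈ Λ) (hx₀N : ⟪x₀, x₀⟫_ℝ = 2 * m - 2)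
    (S₀ : Set E) (hS₀ : S₀ = {x : E | x ∈ Λ ∧ ⟪x, x⟫_ℝ = m ∧ ⟪x₀, x⟫_ℝ = m - 1})
    (𝓔 : Set E)
    (h𝓔 : 𝓔 = {y : E | y ∈ Λ ∧ ⟪y, y⟫_ℝ = 2 * m + 2 ∧ ∃ z ∈ Λ, y - x₀ = (2 : ℝ) • z})
    (hne : 𝓔.Nonempty) :
    Module.finrank ℝ (Submodule.span ℝ 𝓔) = Module.finrank ℝ (Submodule.span ℝ S₀) - 1 :=
  rank_E_eq_rank_S0_sub_one_general Λ m hmin hmeven x₀ hx₀ hx₀N S₀ hS₀ 𝓔 h𝓔 hne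
end

section
/- Let Λ be an integral lattice with odd minimum m ≥ 3 in a Euclidean space, generated (as a group) by its set S(Λ) of minimal vectors, and such that ⟨x, y⟩ = 1 or −1 for all non-proportional x, y ∈ S(Λ). Then for all u, v in the even part Λ_ev = {x ∈ Λ : N(x) is even}, the inner product ⟨u, v⟩ is an even integer; in particular every u ∈ Λ_ev has N(u) divisible by 4 (so that Λ_ev rescaled by 1/√2 is an even integral lattice). -/
open scoped InnerProductSpace

/-- Remark 1.6. Let `Λ` be an integral lattice with odd minimum
`m ≥ 3`, generated by its minimal vectors, with `⟨x, y⟩ = ±1` for all non-proportional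
minimal vectors. Then all inner products on the even part `Λ_ev` are even integers;
in particular every `u ∈ Λ_ev` has norm divisible by `4` (so `Λ_ev` rescaled by
`1/√2` is an even integral lattice). -/
theorem even_part_inner_even
    {E : Type*} [NormedAddCommGroup E] [InnerProductSpace ℝ E] [FiniteDimensional ℝ E]
    (Λ : AddSubgroup E) (hdisc : DiscreteTopology Λ) (m : ℝ)
    (hmin : IsLeast {r : ℝ | ∃ x ∈ Λ, x ≠ 0 ∧ ⟪x, x⟫_ℝ = r} m)
    (hintegral : ∀ x ∈ Λ, ∀ y ∈ Λ, ∃ k : ℤ, ⟪x, y⟫_ℝ = (k : ℝ))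
    (hmodd : ∃ k : ℤ, m = 2 * (k : ℝ) + 1) (hm3 : 3 ≤ m)
    (hgen : AddSubgroup.closure {x : E | x ∈ Λ ∧ ⟪x, x⟫_ℝ = m} = Λ)
    (hequi : ∀ x ∈ Λ, ∀ y ∈ Λ, ⟪x, x⟫_ℝ = m → ⟪y, y⟫_ℝ = m → y ≠ x → y ≠ -x →
      (⟪x, y⟫_ℝ = 1 ∨ ⟪x, y⟫_ℝ = -1)) :
    (∀ u ∈ Λ, ∀ v ∈ Λ, (∃ k : ℤ, ⟪u, u⟫_ℝ = 2 * (k : ℝ)) →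
      (∃ k : ℤ, ⟪v, v⟫_ℝ = 2 * (k : ℝ)) → ∃ k : ℤ, ⟪u, v⟫_ℝ = 2 * (k : ℝ)) ∧
    (∀ u ∈ Λ, (∃ k : ℤ, ⟪u, u⟫_ℝ = 2 * (k : ℝ)) → ∃ k : ℤ, ⟪u, u⟫_ℝ = 4 * (k : ℝ)) := by
  obtain ⟨k0, hk0⟩ := hmodd
  set m₀ : ℤ := 2 * k0 + 1 with hm₀def
  have hm₀ : m = (m₀ : ℝ) := by rw [hk0, hm₀def]; push_cast; ring
  have hm₀odd : m₀ % 2 = 1 := by omega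
  have hmem : ∀ {x : E}, x ∈ AddSubgroup.closure {x : E | x ∈ Λ ∧ ⟪x, x⟫_ℝ = m} → x ∈ Λ := by
    intro x hx; rwa [hgen] at hx
  -- Lemma A: for every x ∈ Λ, N(x) is an integer c and ⟪s, x⟫ ≡ c (mod 2) for every
  -- minimal vector s.
  have lemA : ∀ x ∈ Λ, ∃ c : ℤ, ⟪x, x⟫_ℝ = (c : ℝ) ∧
      ∀ s ∈ Λ, ⟪s, s⟫_ℝ = m → ∃ a : ℤ, ⟪s, x⟫_ℝ = (a : ℝ) ∧ a % 2 = c % 2 := by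
    intro x hx
    rw [← hgen] at hx
    induction hx using AddSubgroup.closure_induction with
    | mem s hs =>
      obtain ⟨hsΛ, hsm⟩ := hs
      refine ⟨m₀, by rw [hsm, hm₀], ?_⟩
      intro t htΛ htm
      by_cases h1 : s = t
      · exact ⟨m₀, by rw [h1] at hsm ⊢; rw [hsm, hm₀], rfl⟩
      by_cases h2 : s = -t
      · refine ⟨-m₀, ?_, by omega⟩
        rw [h2, inner_neg_right, htm, hm₀]; push_cast; ring
      · rcases hequi t htΛ s hsΛ htm hsm h1 h2 with h | h
        · exact ⟨1, by rw [h]; norm_num, by omega⟩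
        · exact ⟨-1, by rw [h]; norm_num, by omega⟩
    | zero =>
      exact ⟨0, by simp, fun s _ _ => ⟨0, by simp, rfl⟩⟩
    | add x y hx hy ihx ihy =>
      obtain ⟨c₁, hc₁, h₁⟩ := ihx
      obtain ⟨c₂, hc₂, h₂⟩ := ihy
      obtain ⟨d, hd⟩ := hintegral x (hmem hx) y (hmem hy)
      refine ⟨c₁ + c₂ + 2 * d, ?_, ?_⟩
      · rw [real_inner_add_add_self, hc₁, hc₂, hd]; push_cast; ring
      · intro s hsΛ hsm
        obtain ⟨a₁, ha₁, ha₁m⟩ := h₁ s hsΛ hsm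
        obtain ⟨a₂, ha₂, ha₂m⟩ := h₂ s hsΛ hsm
        refine ⟨a₁ + a₂, ?_, by omega⟩
        rw [inner_add_right, ha₁, ha₂]; push_cast; ring
    | neg x hx ihx =>
      obtain ⟨c, hc, h⟩ := ihx
      refine ⟨c, by rw [inner_neg_neg]; exact hc, ?_⟩
      intro s hsΛ hsm
      obtain ⟨a, ha, ham⟩ := h s hsΛ hsm
      refine ⟨-a, ?_, by omega⟩
      rw [inner_neg_right, ha]; push_cast; ring
  -- Lemma B: for v, x ∈ Λ, ⟪x, v⟫ ≡ N(x) · N(v) (mod 2).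
  have lemB : ∀ v ∈ Λ, ∀ x ∈ Λ, ∃ a b c : ℤ, ⟪x, v⟫_ℝ = (a : ℝ) ∧ ⟪x, x⟫_ℝ = (c : ℝ) ∧
      ⟪v, v⟫_ℝ = (b : ℝ) ∧ a % 2 = (c * b) % 2 := by
    intro v hv
    obtain ⟨b, hb, hbs⟩ := lemA v hv
    suffices h : ∀ x ∈ Λ, ∃ a c : ℤ, ⟪x, v⟫_ℝ = (a : ℝ) ∧ ⟪x, x⟫_ℝ = (c : ℝ) ∧
        a % 2 = (c * b) % 2 by
      intro x hx
      obtain ⟨a, c, h1, h2, h3⟩ := h x hx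
      exact ⟨a, b, c, h1, h2, hb, h3⟩
    intro x hx
    rw [← hgen] at hx
    induction hx using AddSubgroup.closure_induction with
    | mem s hs =>
      obtain ⟨hsΛ, hsm⟩ := hs
      obtain ⟨a, ha, ham⟩ := hbs s hsΛ hsm
      refine ⟨a, m₀, ha, by rw [hsm, hm₀], ?_⟩
      have hmul := Int.mul_emod m₀ b 2
      rw [hm₀odd, one_mul] at hmul
      omega
    | zero =>
      exact ⟨0, 0, by simp, by simp, by simp⟩
    | add x y hx hy ihx ihy =>
      obtain ⟨a₁, c₁, ha₁, hc₁, h₁⟩ := ihx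
      obtain ⟨a₂, c₂, ha₂, hc₂, h₂⟩ := ihy
      obtain ⟨d, hd⟩ := hintegral x (hmem hx) y (hmem hy)
      refine ⟨a₁ + a₂, c₁ + c₂ + 2 * d, ?_, ?_, ?_⟩
      · rw [inner_add_left, ha₁, ha₂]; push_cast; ring
      · rw [real_inner_add_add_self, hc₁, hc₂, hd]; push_cast; ring
      · have key : ((c₁ + c₂ + 2 * d) * b) % 2 = (c₁ * b + c₂ * b) % 2 := by
          have : (Int.ModEq 2 ((c₁ + c₂ + 2 * d) * b) ((c₁ + c₂) * b)) :=
            Int.ModEq.mul_right b (by unfold Int.ModEq; omega)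
          calc ((c₁ + c₂ + 2 * d) * b) % 2 = ((c₁ + c₂) * b) % 2 := this
            _ = (c₁ * b + c₂ * b) % 2 := by ring_nf
        rw [key]
        set p₁ := c₁ * b
        set p₂ := c₂ * b
        omega
    | neg x hx ihx =>
      obtain ⟨a, c, ha, hc, h⟩ := ihx
      refine ⟨-a, c, ?_, by rw [inner_neg_neg]; exact hc, by omega⟩
      rw [inner_neg_left, ha]; push_cast; ring
  -- Lemma C: N(x) ≡ 0 or m₀ (mod 4) for every x ∈ Λ.
  have lemC : ∀ x ∈ Λ, ∃ c : ℤ, ⟪x, x⟫_ℝ = (c : ℝ) ∧ (c % 4 = 0 ∨ c % 4 = m₀ % 4) := by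
    intro x hx
    rw [← hgen] at hx
    induction hx using AddSubgroup.closure_induction with
    | mem s hs =>
      exact ⟨m₀, by rw [hs.2, hm₀], Or.inr rfl⟩
    | zero =>
      exact ⟨0, by simp, Or.inl rfl⟩
    | add x y hx hy ihx ihy =>
      obtain ⟨c₁, hc₁, h₁⟩ := ihx
      obtain ⟨c₂, hc₂, h₂⟩ := ihy
      obtain ⟨a, b, c, ha, hc, hb, hab⟩ := lemB y (hmem hy) x (hmem hx)
      -- identify c₁ = c, c₂ = b
      have hcc : c₁ = c := by
        have : (c₁ : ℝ) = (c : ℝ) := by rw [← hc, ← hc₁]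
        exact_mod_cast this
      have hbb : c₂ = b := by
        have : (c₂ : ℝ) = (b : ℝ) := by rw [← hb, ← hc₂]
        exact_mod_cast this
      subst hcc hbb
      refine ⟨c₁ + c₂ + 2 * a, ?_, ?_⟩
      · rw [real_inner_add_add_self, hc₁, hc₂, ha]; push_cast; ring
      · have hmul := Int.mul_emod c₁ c₂ 2
        have e₁ : c₁ % 4 % 2 = c₁ % 2 := Int.emod_emod_of_dvd c₁ (by norm_num)
        have e₂ : c₂ % 4 % 2 = c₂ % 2 := Int.emod_emod_of_dvd c₂ (by norm_num)
        have e₃ : m₀ % 4 % 2 = m₀ % 2 := Int.emod_emod_of_dvd m₀ (by norm_num)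
        rcases h₁ with h₁ | h₁ <;> rcases h₂ with h₂ | h₂
        · have q₁ : c₁ % 2 = 0 := by omega
          have q₂ : c₂ % 2 = 0 := by omega
          rw [q₁, q₂] at hmul; norm_num at hmul
          omega
        · have q₁ : c₁ % 2 = 0 := by omega
          have q₂ : c₂ % 2 = 1 := by omega
          rw [q₁, q₂] at hmul; norm_num at hmul
          omega
        · have q₁ : c₁ % 2 = 1 := by omega
          have q₂ : c₂ % 2 = 0 := by omega
          rw [q₁, q₂] at hmul; norm_num at hmul
          omega
        · have q₁ : c₁ % 2 = 1 := by omega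
          have q₂ : c₂ % 2 = 1 := by omega
          rw [q₁, q₂] at hmul; norm_num at hmul
          omega
    | neg x hx ihx =>
      obtain ⟨c, hc, h⟩ := ihx
      exact ⟨c, by rw [inner_neg_neg]; exact hc, h⟩
  constructor
  · intro u hu v hv ⟨k₁, hk₁⟩ ⟨k₂, hk₂⟩
    obtain ⟨a, b, c, ha, hc, hb, hab⟩ := lemB v hv u hu
    have hce : c = 2 * k₁ := by
      have : (c : ℝ) = 2 * (k₁ : ℝ) := by rw [← hc, hk₁]
      exact_mod_cast this
    have hmul := Int.mul_emod c b 2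
    have q₁ : c % 2 = 0 := by omega
    rw [q₁] at hmul; norm_num at hmul
    have h2a : a = 2 * (a / 2) := by omega
    refine ⟨a / 2, ?_⟩
    rw [ha]
    exact_mod_cast congrArg (Int.cast : ℤ → ℝ) h2a
  · intro u hu ⟨k₁, hk₁⟩
    obtain ⟨c, hc, h⟩ := lemC u hu
    have hce : c = 2 * k₁ := by
      have : (c : ℝ) = 2 * (k₁ : ℝ) := by rw [← hc, hk₁]
      exact_mod_cast this
    have e₃ : m₀ % 4 % 2 = m₀ % 2 := Int.emod_emod_of_dvd m₀ (by norm_num)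
    have h4c : c = 4 * (c / 4) := by omega
    refine ⟨c / 4, ?_⟩
    rw [hc]
    exact_mod_cast congrArg (Int.cast : ℤ → ℝ) h4c
end

section
/- Let n ≥ 2 and let A_n = {x ∈ ℤ^{n+1} : x₀ + x₁ + ⋯ + x_n = 0}, a lattice of minimum 2 in ℝ^{n+1} with the standard inner product, and let x₀ = ε₀ − ε₁ (where ε₀, …, ε_n is the canonical basis of ℝ^{n+1}). Then {y ∈ A_n : N(y) = 6 and y − x₀ ∈ 2A_n} = {ε₀ + ε₁ − 2ε_i : 2 ≤ i ≤ n} ∪ {−(ε₀ + ε₁ − 2ε_i) : 2 ≤ i ≤ n}, a set of cardinality 2(n − 1). -/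
open scoped InnerProductSpace
open Finset

namespace AN6

lemma fin_zero_ne_one (m : ℕ) : (0 : Fin (m+3)) ≠ 1 := by simp [Fin.ext_iff]

noncomputable def vv (m : ℕ) (i : Fin (m + 3)) : EuclideanSpace ℝ (Fin (m + 3)) :=
  EuclideanSpace.single 0 (1 : ℝ) + EuclideanSpace.single 1 (1 : ℝ)
    - (2 : ℝ) • EuclideanSpace.single i (1 : ℝ)

lemma vv_apply (m : ℕ) (i j : Fin (m + 3)) :
    vv m i j = (if j = 0 then (1:ℝ) else 0) + (if j = 1 then (1:ℝ) else 0)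
      - 2 * (if j = i then (1:ℝ) else 0) := by
  simp [vv, EuclideanSpace.single_apply]

lemma x0_apply (m : ℕ) (j : Fin (m + 3)) :
    ((EuclideanSpace.single 0 (1 : ℝ) - EuclideanSpace.single 1 (1 : ℝ) :
        EuclideanSpace ℝ (Fin (m + 3)))) j
      = (if j = 0 then (1:ℝ) else 0) - (if j = 1 then (1:ℝ) else 0) := by
  simp [EuclideanSpace.single_apply]

lemma sum_split {M : Type*} [AddCommMonoid M] (m : ℕ) (i : Fin (m + 3))
    (hi0 : i ≠ 0) (hi1 : i ≠ 1) (g : Fin (m + 3) → M)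
    (hg : ∀ j, j ≠ 0 → j ≠ 1 → j ≠ i → g j = 0) :
    ∑ j, g j = g 0 + g 1 + g i := by
  have h01 : (0 : Fin (m+3)) ≠ 1 := fin_zero_ne_one m
  rw [← Finset.add_sum_erase _ _ (mem_univ (0 : Fin (m+3)))]
  have h1 : (1 : Fin (m+3)) ∈ (univ : Finset (Fin (m+3))).erase 0 := by
    simp [h01.symm]
  rw [← Finset.add_sum_erase _ _ h1]
  have hi : i ∈ ((univ : Finset (Fin (m+3))).erase 0).erase 1 := by
    simp [hi0, hi1]
  rw [← Finset.add_sum_erase _ _ hi]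
  rw [Finset.sum_eq_zero, add_zero, add_assoc]
  intro j hj
  simp only [Finset.mem_erase, Finset.mem_univ, and_true] at hj
  exact hg j hj.2.2 hj.2.1 hj.1

lemma int_key (m : ℕ) (k : Fin (m + 3) → ℤ)
    (hsum : ∑ i, k i = 0) (hnorm : ∑ i, (k i)^2 = 6)
    (h0 : Odd (k 0)) (h1 : Odd (k 1))
    (he : ∀ i : Fin (m + 3), i ≠ 0 → i ≠ 1 → Even (k i)) :
    ∃ i : Fin (m + 3), 2 ≤ (i : ℕ) ∧
      ((k 0 = 1 ∧ k 1 = 1 ∧ k i = -2) ∨ (k 0 = -1 ∧ k 1 = -1 ∧ k i = 2)) ∧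
      ∀ j, j ≠ 0 → j ≠ 1 → j ≠ i → k j = 0 := by
  classical
  have h01 : (0 : Fin (m+3)) ≠ 1 := fin_zero_ne_one m
  set s2 : Finset (Fin (m+3)) := ((univ : Finset (Fin (m+3))).erase 0).erase 1 with hs2
  have hmem : ∀ j, j ∈ s2 ↔ j ≠ 0 ∧ j ≠ 1 := by
    intro j; simp [hs2, and_comm]
  have hsplitN : (k 0)^2 + (k 1)^2 + ∑ j ∈ s2, (k j)^2 = 6 := by
    rw [← hnorm]
    rw [← Finset.add_sum_erase _ _ (mem_univ (0 : Fin (m+3)))]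
    rw [← Finset.add_sum_erase _ (fun j => (k j)^2) (by simp [h01.symm] :
        (1 : Fin (m+3)) ∈ (univ : Finset (Fin (m+3))).erase 0)]
    ring
  have hsplitS : k 0 + k 1 + ∑ j ∈ s2, k j = 0 := by
    rw [← hsum]
    rw [← Finset.add_sum_erase _ _ (mem_univ (0 : Fin (m+3)))]
    rw [← Finset.add_sum_erase _ k (by simp [h01.symm] :
        (1 : Fin (m+3)) ∈ (univ : Finset (Fin (m+3))).erase 0)]
    ring
  have hs2nonneg : (0:ℤ) ≤ ∑ j ∈ s2, (k j)^2 :=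
    Finset.sum_nonneg fun j _ => sq_nonneg _
  have hk0sq : 1 ≤ (k 0)^2 := by
    rcases h0 with ⟨t, ht⟩
    rcases lt_trichotomy t 0 with h | h | h <;> nlinarith
  have hk1sq : 1 ≤ (k 1)^2 := by
    rcases h1 with ⟨t, ht⟩
    rcases lt_trichotomy t 0 with h | h | h <;> nlinarith
  have hk0 : k 0 = 1 ∨ k 0 = -1 := by
    have hb : -2 ≤ k 0 ∧ k 0 ≤ 2 := ⟨by nlinarith, by nlinarith⟩
    have hmod := Int.odd_iff.mp h0
    omega
  have hk1 : k 1 = 1 ∨ k 1 = -1 := by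
    have hb : -2 ≤ k 1 ∧ k 1 ≤ 2 := ⟨by nlinarith, by nlinarith⟩
    have hmod := Int.odd_iff.mp h1
    omega
  have hk0sq' : (k 0)^2 = 1 := by rcases hk0 with h | h <;> rw [h] <;> ring
  have hk1sq' : (k 1)^2 = 1 := by rcases hk1 with h | h <;> rw [h] <;> ring
  have hs2sum : ∑ j ∈ s2, (k j)^2 = 4 := by omega
  have hex : ∃ i ∈ s2, k i ≠ 0 := by
    by_contra h
    push_neg at h
    have : ∑ j ∈ s2, (k j)^2 = 0 :=
      Finset.sum_eq_zero fun j hj => by rw [h j hj]; ring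
    omega
  obtain ⟨i, hi, hine⟩ := hex
  have hi01 := (hmem i).mp hi
  have hki4 : 4 ≤ (k i)^2 := by
    rcases he i hi01.1 hi01.2 with ⟨t, ht⟩
    have htne : t ≠ 0 := by intro h; rw [h] at ht; simp at ht; exact hine ht
    rcases lt_trichotomy t 0 with h | h | h <;> first | nlinarith | exact absurd h htne
  have hrest : (k i)^2 + ∑ j ∈ s2.erase i, (k j)^2 = 4 := by
    rw [Finset.add_sum_erase _ (fun j => (k j)^2) hi]; exact hs2sum
  have hrestnonneg : (0:ℤ) ≤ ∑ j ∈ s2.erase i, (k j)^2 :=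
    Finset.sum_nonneg fun j _ => sq_nonneg _
  have hrest0 : ∑ j ∈ s2.erase i, (k j)^2 = 0 := by linarith
  have hki : (k i)^2 = 4 := by linarith
  have hzero : ∀ j, j ≠ 0 → j ≠ 1 → j ≠ i → k j = 0 := by
    intro j hj0 hj1 hji
    have hj : j ∈ s2.erase i := by
      rw [Finset.mem_erase, hmem]; exact ⟨hji, hj0, hj1⟩
    have := (Finset.sum_eq_zero_iff_of_nonneg (fun j _ => sq_nonneg (k j))).mp hrest0 j hj
    exact pow_eq_zero_iff (by norm_num) |>.mp this
  have hki2 : k i = 2 ∨ k i = -2 := by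
    have : (k i - 2) * (k i + 2) = 0 := by nlinarith
    rcases mul_eq_zero.mp this with h | h
    · left; omega
    · right; omega
  have hs2sum' : ∑ j ∈ s2, k j = k i := by
    rw [← Finset.add_sum_erase _ k hi, Finset.sum_eq_zero, add_zero]
    intro j hj
    rw [Finset.mem_erase, hmem] at hj
    exact hzero j hj.2.1 hj.2.2 hj.1
  have hlin : k 0 + k 1 + k i = 0 := by omega
  have hival : 2 ≤ (i : ℕ) := by
    have hv0 : (i : ℕ) ≠ 0 := fun h => hi01.1 (Fin.ext (by rw [h]; rfl))
    have hv1 : (i : ℕ) ≠ 1 := fun h => hi01.2 (Fin.ext (by rw [h]; rfl))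
    omega
  refine ⟨i, hival, ?_, hzero⟩
  rcases hki2 with h | h <;> rcases hk0 with h0' | h0' <;> rcases hk1 with h1' | h1' <;> omega

lemma val_two_le {m : ℕ} {i : Fin (m+3)} (h : 2 ≤ (i : ℕ)) : i ≠ 0 ∧ i ≠ 1 := by
  constructor <;> (intro h'; subst h'; simp at h)

lemma forward (m : ℕ) (y : EuclideanSpace ℝ (Fin (m+3)))
    (hint : ∀ j, ∃ k : ℤ, y j = (k:ℝ)) (hsum : ∑ j, y j = 0)
    (hin : ⟪y, y⟫_ℝ = 6) (z : EuclideanSpace ℝ (Fin (m+3)))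
    (hzint : ∀ j, ∃ k : ℤ, z j = (k:ℝ))
    (hz : y - (EuclideanSpace.single 0 (1:ℝ) - EuclideanSpace.single 1 (1:ℝ)) = (2:ℝ) • z) :
    ∃ i : Fin (m+3), 2 ≤ (i:ℕ) ∧ (y = vv m i ∨ y = - vv m i) := by
  choose k hk using hint
  choose w hw using hzint
  have h01 : (0 : Fin (m+3)) ≠ 1 := fin_zero_ne_one m
  have hsumZ : ∑ j, k j = 0 := by
    have : ∑ j, ((k j : ℝ)) = 0 := by
      rw [← hsum]; exact Finset.sum_congr rfl fun j _ => (hk j).symm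
    exact_mod_cast this
  have hnormZ : ∑ j, (k j)^2 = 6 := by
    have h6 : ∑ j, y j * y j = 6 := by
      rw [← hin]; simp only [PiLp.inner_apply, RCLike.inner_apply, conj_trivial]
    have : ∑ j, ((k j : ℝ))^2 = 6 := by
      rw [← h6]
      refine Finset.sum_congr rfl fun j _ => ?_
      rw [hk j]; ring
    exact_mod_cast this
  have hzc : ∀ j, y j -
      ((EuclideanSpace.single 0 (1:ℝ) - EuclideanSpace.single 1 (1:ℝ) :
        EuclideanSpace ℝ (Fin (m+3)))) j = 2 * z j := by
    intro j
    have := congrArg (· j) hz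
    simpa using this
  have hp0 : k 0 = 1 + 2 * w 0 := by
    have := hzc 0
    rw [x0_apply, hk, hw] at this
    simp [h01] at this
    exact_mod_cast (by linarith : (k 0 : ℝ) = 1 + 2 * (w 0 : ℝ))
  have hp1 : k 1 = -1 + 2 * w 1 := by
    have := hzc 1
    rw [x0_apply, hk, hw] at this
    simp [h01.symm] at this
    exact_mod_cast (by linarith : (k 1 : ℝ) = -1 + 2 * (w 1 : ℝ))
  have hpe : ∀ j, j ≠ 0 → j ≠ 1 → k j = 2 * w j := by
    intro j hj0 hj1
    have := hzc j
    rw [x0_apply, hk, hw] at this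
    simp [hj0, hj1] at this
    exact_mod_cast this
  obtain ⟨i, hival, hcase, hzero⟩ := int_key m k hsumZ hnormZ
    ⟨w 0, by omega⟩ ⟨w 1 - 1, by omega⟩
    (fun j hj0 hj1 => ⟨w j, by have := hpe j hj0 hj1; omega⟩)
  obtain ⟨hi0, hi1⟩ := val_two_le hival
  refine ⟨i, hival, ?_⟩
  rcases hcase with ⟨e0, e1, ei⟩ | ⟨e0, e1, ei⟩
  · left
    ext j
    rw [hk j, vv_apply]
    rcases eq_or_ne j 0 with rfl | hj0
    · rw [e0]; simp [h01, Ne.symm hi0]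
    rcases eq_or_ne j 1 with rfl | hj1
    · rw [e1]; simp [h01.symm, Ne.symm hi1]
    rcases eq_or_ne j i with rfl | hji
    · rw [ei]; simp [hi0, hi1]
    · rw [hzero j hj0 hj1 hji]; simp [hj0, hj1, hji]
  · right
    ext j
    rw [hk j]
    have : (- vv m i) j = -(vv m i j) := by simp
    rw [this, vv_apply]
    rcases eq_or_ne j 0 with rfl | hj0
    · rw [e0]; simp [h01, Ne.symm hi0]
    rcases eq_or_ne j 1 with rfl | hj1
    · rw [e1]; simp [h01.symm, Ne.symm hi1]
    rcases eq_or_ne j i with rfl | hji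
    · rw [ei]; simp [hi0, hi1]
    · rw [hzero j hj0 hj1 hji]; simp [hj0, hj1, hji]

lemma vv_mem (m : ℕ) (i : Fin (m+3)) (hi0 : i ≠ 0) (hi1 : i ≠ 1) :
    (∀ j, ∃ c : ℤ, vv m i j = (c:ℝ)) ∧ ∑ j, vv m i j = 0 := by
  have h01 : (0 : Fin (m+3)) ≠ 1 := fin_zero_ne_one m
  constructor
  · intro j
    refine ⟨(if j = 0 then 1 else 0) + (if j = 1 then 1 else 0)
      - 2 * (if j = i then 1 else 0), ?_⟩
    rw [vv_apply]; push_cast; split_ifs <;> norm_num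
  · rw [sum_split m i hi0 hi1 _ (fun j hj0 hj1 hji => by
      rw [vv_apply]; simp [hj0, hj1, hji])]
    rw [vv_apply, vv_apply, vv_apply]
    simp [h01, h01.symm, hi0, hi1, Ne.symm hi0, Ne.symm hi1]
    norm_num

lemma vv_inner (m : ℕ) (i : Fin (m+3)) (hi0 : i ≠ 0) (hi1 : i ≠ 1) :
    ⟪vv m i, vv m i⟫_ℝ = 6 := by
  have h01 : (0 : Fin (m+3)) ≠ 1 := fin_zero_ne_one m
  have h : ⟪vv m i, vv m i⟫_ℝ = ∑ j, vv m i j * vv m i j := by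
    simp only [PiLp.inner_apply, RCLike.inner_apply, conj_trivial]
  rw [h, sum_split m i hi0 hi1 _ (fun j hj0 hj1 hji => by
      rw [vv_apply]; simp [hj0, hj1, hji])]
  rw [vv_apply, vv_apply, vv_apply]
  simp [h01, h01.symm, hi0, hi1, Ne.symm hi0, Ne.symm hi1]
  norm_num

lemma single_sub_mem (m : ℕ) (a b : Fin (m+3)) (hab : a ≠ b) :
    (∀ j, ∃ c : ℤ, ((EuclideanSpace.single a (1:ℝ) - EuclideanSpace.single b (1:ℝ) :
        EuclideanSpace ℝ (Fin (m+3)))) j = (c:ℝ)) ∧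
    ∑ j, ((EuclideanSpace.single a (1:ℝ) - EuclideanSpace.single b (1:ℝ) :
        EuclideanSpace ℝ (Fin (m+3)))) j = 0 := by
  constructor
  · intro j
    refine ⟨(if j = a then 1 else 0) - (if j = b then 1 else 0), ?_⟩
    push_cast
    simp [EuclideanSpace.single_apply]
  · simp [EuclideanSpace.single_apply, Finset.sum_sub_distrib]

def idxEquiv (m : ℕ) : {i : Fin (m + 3) // 2 ≤ (i : ℕ)} ≃ Fin (m + 1) where
  toFun i := ⟨(i : Fin (m+3)).val - 2, by have := i.1.isLt; have := i.2; omega⟩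
  invFun j := ⟨⟨(j : ℕ) + 2, by omega⟩, by simp⟩
  left_inv i := by
    obtain ⟨⟨v, hv⟩, h2⟩ := i
    simp only [Subtype.mk.injEq, Fin.mk.injEq]
    simp at h2
    omega
  right_inv j := by
    obtain ⟨v, hv⟩ := j
    simp only [Fin.mk.injEq]
    omega

end AN6



/-- For the root lattice `A_n ⊂ ℝ^{n+1}` (`n ≥ 2`) and
`x₀ = ε₀ − ε₁`, the set of vectors of norm `6` congruent to `x₀` mod `2A_n` is
`{±(ε₀ + ε₁ − 2ε_i) : 2 ≤ i ≤ n}`, of cardinality `2(n − 1)`. -/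
theorem A_n_norm_six_class (n : ℕ) (hn : 2 ≤ n)
    (A : Set (EuclideanSpace ℝ (Fin (n + 1))))
    (hA : A = {x | (∀ i, ∃ k : ℤ, x i = (k : ℝ)) ∧ ∑ i, x i = 0})
    (x₀ : EuclideanSpace ℝ (Fin (n + 1)))
    (hx₀ : x₀ = EuclideanSpace.single 0 (1 : ℝ) - EuclideanSpace.single 1 (1 : ℝ))
    (𝓔 : Set (EuclideanSpace ℝ (Fin (n + 1))))
    (h𝓔 : 𝓔 = {y | y ∈ A ∧ ⟪y, y⟫_ℝ = 6 ∧ ∃ z ∈ A, y - x₀ = (2 : ℝ) • z}) :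
    𝓔 = {y | ∃ i : Fin (n + 1), 2 ≤ (i : ℕ) ∧
          (y = EuclideanSpace.single 0 (1 : ℝ) + EuclideanSpace.single 1 (1 : ℝ)
                - (2 : ℝ) • EuclideanSpace.single i (1 : ℝ) ∨
           y = -(EuclideanSpace.single 0 (1 : ℝ) + EuclideanSpace.single 1 (1 : ℝ)
                - (2 : ℝ) • EuclideanSpace.single i (1 : ℝ)))} ∧
    Nat.card 𝓔 = 2 * (n - 1) := by
  obtain ⟨m, rfl⟩ : ∃ m, n = m + 2 := ⟨n - 2, by omega⟩
  subst hA hx₀ h𝓔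
  have hset : {y : EuclideanSpace ℝ (Fin (m + 2 + 1)) |
      y ∈ {x : EuclideanSpace ℝ (Fin (m + 2 + 1)) |
        (∀ i, ∃ k : ℤ, x i = (k : ℝ)) ∧ ∑ i, x i = 0} ∧ ⟪y, y⟫_ℝ = 6 ∧
        ∃ z ∈ {x : EuclideanSpace ℝ (Fin (m + 2 + 1)) |
          (∀ i, ∃ k : ℤ, x i = (k : ℝ)) ∧ ∑ i, x i = 0},
          y - (EuclideanSpace.single 0 (1 : ℝ) - EuclideanSpace.single 1 (1 : ℝ)) = (2 : ℝ) • z}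
      = {y | ∃ i : Fin (m + 2 + 1), 2 ≤ (i : ℕ) ∧
          (y = EuclideanSpace.single 0 (1 : ℝ) + EuclideanSpace.single 1 (1 : ℝ)
                - (2 : ℝ) • EuclideanSpace.single i (1 : ℝ) ∨
           y = -(EuclideanSpace.single 0 (1 : ℝ) + EuclideanSpace.single 1 (1 : ℝ)
                - (2 : ℝ) • EuclideanSpace.single i (1 : ℝ)))} := by
    ext y
    simp only [Set.mem_setOf_eq]
    constructor
    · rintro ⟨⟨hint, hsum⟩, hin, z, ⟨hzint, hzsum⟩, hz⟩
      obtain ⟨i, hival, hcase⟩ := AN6.forward m y hint hsum hin z hzint hz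
      exact ⟨i, hival, hcase⟩
    · rintro ⟨i, hival, hcase⟩
      obtain ⟨hi0, hi1⟩ := AN6.val_two_le hival
      have hi0' : i ≠ (0 : Fin (m + 3)) := hi0
      rcases hcase with rfl | rfl
      · refine ⟨⟨(AN6.vv_mem m i hi0 hi1).1, (AN6.vv_mem m i hi0 hi1).2⟩,
          AN6.vv_inner m i hi0 hi1,
          EuclideanSpace.single 1 (1:ℝ) - EuclideanSpace.single i (1:ℝ),
          ⟨(AN6.single_sub_mem m 1 i (Ne.symm hi1)).1, (AN6.single_sub_mem m 1 i (Ne.symm hi1)).2⟩,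
          ?_⟩
        module
      · refine ⟨⟨fun j => ?_, ?_⟩, ?_,
          EuclideanSpace.single i (1:ℝ) - EuclideanSpace.single 0 (1:ℝ),
          ⟨(AN6.single_sub_mem m i 0 hi0).1, (AN6.single_sub_mem m i 0 hi0).2⟩,
          ?_⟩
        · obtain ⟨c, hc⟩ := (AN6.vv_mem m i hi0 hi1).1 j
          refine ⟨-c, ?_⟩
          show (-(AN6.vv m i) : EuclideanSpace ℝ (Fin (m+3))) j = ((-c : ℤ) : ℝ)
          have : (-(AN6.vv m i) : EuclideanSpace ℝ (Fin (m+3))) j = -(AN6.vv m i j) := by simp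
          rw [this, hc]; push_cast; ring
        · have hs := (AN6.vv_mem m i hi0 hi1).2
          have h1 : ∀ j, (-(AN6.vv m i) : EuclideanSpace ℝ (Fin (m+3))) j = -(AN6.vv m i j) :=
            fun j => by simp
          show ∑ j, (-(AN6.vv m i) : EuclideanSpace ℝ (Fin (m+3))) j = 0
          rw [Finset.sum_congr rfl (fun j _ => h1 j), Finset.sum_neg_distrib, hs, neg_zero]
        · exact (inner_neg_neg _ _).trans (AN6.vv_inner m i hi0 hi1)
        · module
  refine ⟨hset, ?_⟩
  rw [hset]
  have hv0 : ∀ (i : Fin (m+3)), i ≠ 0 → AN6.vv m i 0 = 1 := fun i hi0 => by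
    rw [AN6.vv_apply]; simp [AN6.fin_zero_ne_one m, Ne.symm hi0]
  have hvii : ∀ (i : Fin (m+3)), i ≠ 0 → i ≠ 1 → AN6.vv m i i = -2 := fun i h0 h1 => by
    rw [AN6.vv_apply]; simp [h0, h1]
  have hvij : ∀ (i j : Fin (m+3)), i ≠ 0 → i ≠ 1 → i ≠ j → AN6.vv m j i = 0 :=
    fun i j h0 h1 hij => by rw [AN6.vv_apply]; simp [h0, h1, hij]
  have e : (Bool × {i : Fin (m + 3) // 2 ≤ (i : ℕ)}) ≃
      {y : EuclideanSpace ℝ (Fin (m + 2 + 1)) | ∃ i : Fin (m + 2 + 1), 2 ≤ (i : ℕ) ∧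
          (y = EuclideanSpace.single 0 (1 : ℝ) + EuclideanSpace.single 1 (1 : ℝ)
                - (2 : ℝ) • EuclideanSpace.single i (1 : ℝ) ∨
           y = -(EuclideanSpace.single 0 (1 : ℝ) + EuclideanSpace.single 1 (1 : ℝ)
                - (2 : ℝ) • EuclideanSpace.single i (1 : ℝ)))} := by
    refine Equiv.ofBijective
      (fun p => ⟨cond p.1 (AN6.vv m p.2.1) (-(AN6.vv m p.2.1)), ?_⟩) ⟨?_, ?_⟩
    · refine ⟨p.2.1, p.2.2, ?_⟩
      cases hb : p.1
      · exact Or.inr rfl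
      · exact Or.inl rfl
    · rintro ⟨b, i⟩ ⟨c, j⟩ h
      have hval := congrArg Subtype.val h
      obtain ⟨hi0, hi1⟩ := AN6.val_two_le i.2
      obtain ⟨hj0, hj1⟩ := AN6.val_two_le j.2
      have h0 := congrArg (· (0 : Fin (m+3))) hval
      have hneg : ∀ (x : EuclideanSpace ℝ (Fin (m+3))) (a : Fin (m+3)),
          (-x : EuclideanSpace ℝ (Fin (m+3))) a = -(x a) := fun x a => by simp
      cases b <;> cases c <;>
        simp only [Bool.cond_false, Bool.cond_true] at hval h0
      · have hvv : AN6.vv m i.1 = AN6.vv m j.1 := neg_injective hval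
        have hii := congrArg (· i.1) hvv
        rw [hvii i.1 hi0 hi1] at hii
        have hij : i.1 = j.1 := by
          by_contra hne
          rw [hvij i.1 j.1 hi0 hi1 hne] at hii
          norm_num at hii
        rw [Subtype.ext hij]
      · rw [hneg, hv0 i.1 hi0, hv0 j.1 hj0] at h0
        norm_num at h0
      · rw [hneg, hv0 i.1 hi0, hv0 j.1 hj0] at h0
        norm_num at h0
      · have hii := congrArg (· i.1) hval
        rw [hvii i.1 hi0 hi1] at hii
        have hij : i.1 = j.1 := by
          by_contra hne
          rw [hvij i.1 j.1 hi0 hi1 hne] at hii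
          norm_num at hii
        rw [Subtype.ext hij]
    · rintro ⟨y, hy⟩
      obtain ⟨i, hi2, hc⟩ := hy
      rcases hc with rfl | rfl
      · exact ⟨(true, ⟨i, hi2⟩), rfl⟩
      · exact ⟨(false, ⟨i, hi2⟩), rfl⟩
  have h1 := (Nat.card_congr e).symm
  rw [h1, Nat.card_prod]
  have h2 : Nat.card {i : Fin (m + 3) // 2 ≤ (i : ℕ)} = m + 1 := by
    rw [Nat.card_congr (AN6.idxEquiv m)]
    simp [Nat.card_eq_fintype_card]
  have h3 : Nat.card Bool = 2 := by simp [Nat.card_eq_fintype_card]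
  rw [h2, h3]
  omega
end

section
/- Let n ≥ 4 and let D_n = {x ∈ ℤ^n : x₁ + ⋯ + x_n is even}, a lattice of minimum 2 in ℝ^n with the standard inner product, and let x₀ = ε₁ − ε₂ (where ε₁, …, ε_n is the canonical basis of ℝ^n). Then {y ∈ D_n : N(y) = 6 and y − x₀ ∈ 2D_n} = {±(ε₁ + ε₂ + 2ε_i) : 3 ≤ i ≤ n} ∪ {±(ε₁ + ε₂ − 2ε_i) : 3 ≤ i ≤ n}, a set of cardinality 4(n − 2). -/
open scoped InnerProductSpace

private lemma sq_pos_of_ne (x : ℤ) (h : x ≠ 0) : 1 ≤ x * x := by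
  rcases lt_trichotomy x 0 with h' | h' | h'
  · nlinarith
  · exact absurd h' h
  · nlinarith

private lemma odd_sq_le_five (x : ℤ) (hx : Odd x) (h5 : x * x ≤ 5) :
    x = 1 ∨ x = -1 := by
  have hb1 : x ≤ 2 := by nlinarith [sq_nonneg (x - 2)]
  have hb2 : -2 ≤ x := by nlinarith [sq_nonneg (x + 2)]
  obtain ⟨c, hc⟩ := hx
  omega

/-- Integer combinatorics core lemma. -/
theorem Dn_key (n : ℕ) (hn : 4 ≤ n) (a b : Fin n → ℤ)
    (hab : ∀ j : Fin n, a j = 2 * b j + (if (j : ℕ) = 0 then 1 else 0)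
        - (if (j : ℕ) = 1 then 1 else 0))
    (hnorm : ∑ j, a j * a j = 6)
    (hsum : ∃ m : ℤ, ∑ j, a j = 4 * m) :
    ∃ i : Fin n, 2 ≤ (i : ℕ) ∧ ∃ s t : ℤ, (s = 1 ∨ s = -1) ∧ (t = 2 ∨ t = -2) ∧
      ∀ j : Fin n, a j = s * ((if (j : ℕ) = 0 then 1 else 0) + (if (j : ℕ) = 1 then 1 else 0))
        + (if j = i then t else 0) := by
  obtain ⟨m, hm⟩ := hsum
  have h0n : 0 < n := by omega
  have h1n : 1 < n := by omega
  set j0 : Fin n := ⟨0, h0n⟩ with hj0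
  set j1 : Fin n := ⟨1, h1n⟩ with hj1
  have hj01 : j1 ≠ j0 := by simp [hj0, hj1, Fin.ext_iff]
  set u : Finset (Fin n) := (Finset.univ.erase j0).erase j1 with hu
  have hmemu : ∀ j, j ∈ u ↔ (j ≠ j1 ∧ j ≠ j0) := by intro j; simp [hu]
  have hsplit : ∀ f : Fin n → ℤ, ∑ j, f j = f j0 + f j1 + ∑ j ∈ u, f j := by
    intro f
    have h1 : ∑ j, f j = f j0 + ∑ j ∈ Finset.univ.erase j0, f j :=
      (Finset.add_sum_erase _ f (Finset.mem_univ j0)).symm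
    have h2 : ∑ j ∈ Finset.univ.erase j0, f j = f j1 + ∑ j ∈ u, f j :=
      (Finset.add_sum_erase _ f (Finset.mem_erase.mpr ⟨hj01, Finset.mem_univ j1⟩)).symm
    rw [h1, h2]; ring
  have hnorm' : a j0 * a j0 + a j1 * a j1 + ∑ j ∈ u, a j * a j = 6 :=
    (hsplit fun j => a j * a j).symm.trans hnorm
  have hm' : a j0 + a j1 + ∑ j ∈ u, a j = 4 * m := (hsplit a).symm.trans hm
  have ha0 : a j0 = 2 * b j0 + 1 := by have := hab j0; simpa [hj0] using this
  have ha1 : a j1 = 2 * b j1 - 1 := by have := hab j1; simpa [hj1] using this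
  have hau : ∀ j ∈ u, a j = 2 * b j := by
    intro j hj
    rw [hmemu] at hj
    have h1 : (j : ℕ) ≠ 0 := by simpa [Fin.ext_iff, hj0] using hj.2
    have h2 : (j : ℕ) ≠ 1 := by simpa [Fin.ext_iff, hj1] using hj.1
    have := hab j; simp [h1, h2] at this; omega
  have hsum_u : ∑ j ∈ u, a j * a j = 4 * ∑ j ∈ u, b j * b j := by
    rw [Finset.mul_sum]
    exact Finset.sum_congr rfl (fun j hj => by rw [hau j hj]; ring)
  have hbsum_nn : 0 ≤ ∑ j ∈ u, b j * b j :=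
    Finset.sum_nonneg (fun j _ => mul_self_nonneg _)
  have h0le : 1 ≤ a j0 * a j0 := sq_pos_of_ne _ (by omega)
  have h1le : 1 ≤ a j1 * a j1 := sq_pos_of_ne _ (by omega)
  have ha0' : a j0 = 1 ∨ a j0 = -1 :=
    odd_sq_le_five _ ⟨b j0, by omega⟩ (by linarith)
  have ha1' : a j1 = 1 ∨ a j1 = -1 :=
    odd_sq_le_five _ ⟨b j1 - 1, by omega⟩ (by linarith)
  have h0sq : a j0 * a j0 = 1 := by rcases ha0' with h | h <;> rw [h] <;> ring
  have h1sq : a j1 * a j1 = 1 := by rcases ha1' with h | h <;> rw [h] <;> ring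
  have hbsum : ∑ j ∈ u, b j * b j = 1 := by linarith
  have hex : ∃ i ∈ u, b i ≠ 0 := by
    by_contra h
    push_neg at h
    have : ∑ j ∈ u, b j * b j = 0 := Finset.sum_eq_zero (fun j hj => by rw [h j hj]; ring)
    omega
  obtain ⟨i, hiu, hib⟩ := hex
  have hbile : 1 ≤ b i * b i := sq_pos_of_ne _ hib
  have herase : b i * b i + ∑ j ∈ u.erase i, b j * b j = 1 := by
    rw [Finset.add_sum_erase _ (fun j => b j * b j) hiu]; exact hbsum
  have hrest : ∀ j ∈ u.erase i, b j = 0 := by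
    have hnn' : ∀ j ∈ u.erase i, 0 ≤ b j * b j := fun j _ => mul_self_nonneg _
    have hzero : ∑ j ∈ u.erase i, b j * b j = 0 :=
      le_antisymm (by linarith) (Finset.sum_nonneg hnn')
    intro j hj
    have := (Finset.sum_eq_zero_iff_of_nonneg hnn').mp hzero j hj
    exact pow_eq_zero_iff (n := 2) (by norm_num) |>.mp (by nlinarith)
  have hbisq : b i * b i = 1 := by
    have : ∑ j ∈ u.erase i, b j * b j = 0 :=
      Finset.sum_eq_zero (fun j hj => by rw [hrest j hj]; ring)
    linarith
  have hbi : b i = 1 ∨ b i = -1 := by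
    rcases lt_trichotomy (b i) 0 with h | h | h
    · right; nlinarith
    · exact absurd h hib
    · left; nlinarith
  have hi2 : 2 ≤ (i : ℕ) := by
    rw [hmemu] at hiu
    have h1 : (i : ℕ) ≠ 0 := by simpa [Fin.ext_iff, hj0] using hiu.2
    have h2 : (i : ℕ) ≠ 1 := by simpa [Fin.ext_iff, hj1] using hiu.1
    omega
  have hai : a i = 2 * b i := hau i hiu
  have hsumu : ∑ j ∈ u, a j = a i := by
    rw [← Finset.add_sum_erase _ a hiu]
    have : ∑ j ∈ u.erase i, a j = 0 :=
      Finset.sum_eq_zero (fun j hj => by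
        rw [hau j (Finset.mem_of_mem_erase hj), hrest j hj]; ring)
    omega
  have heq : a j0 = a j1 := by
    rcases ha0' with h0 | h0 <;> rcases ha1' with h1 | h1 <;> rcases hbi with hb | hb <;> omega
  have hij0 : i ≠ j0 := ((hmemu i).mp hiu).2
  have hij1 : i ≠ j1 := ((hmemu i).mp hiu).1
  refine ⟨i, hi2, a j0, a i, ha0', by rcases hbi with hb | hb <;> omega, ?_⟩
  intro j
  by_cases hjj0 : j = j0
  · subst hjj0
    simp [Ne.symm hij0, show (j0 : ℕ) = 0 from rfl]
  · by_cases hjj1 : j = j1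
    · subst hjj1
      simp [Ne.symm hij1, show (j1 : ℕ) = 1 from rfl]
      omega
    · have hju : j ∈ u := (hmemu j).mpr ⟨hjj1, hjj0⟩
      have h1 : (j : ℕ) ≠ 0 := by simpa [Fin.ext_iff, hj0] using hjj0
      have h2 : (j : ℕ) ≠ 1 := by simpa [Fin.ext_iff, hj1] using hjj1
      rw [if_neg h1, if_neg h2]
      by_cases hji : j = i
      · subst hji; rw [if_pos rfl]; ring
      · rw [if_neg hji]
        have := hau j hju
        have hbz := hrest j (Finset.mem_erase.mpr ⟨hji, hju⟩)
        omega

section DnAux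

variable {n : ℕ}

private noncomputable def dnE (i : Fin n) : EuclideanSpace ℝ (Fin n) :=
  EuclideanSpace.single i (1 : ℝ)

private noncomputable def dnVec (h0 : 0 < n) (h1 : 1 < n) (s t : ℝ) (i : Fin n) :
    EuclideanSpace ℝ (Fin n) :=
  s • (dnE ⟨0, h0⟩ + dnE ⟨1, h1⟩) + t • dnE i

private lemma dnVec_apply (h0 : 0 < n) (h1 : 1 < n) (s t : ℝ) (i : Fin n) (j : Fin n) :
    dnVec h0 h1 s t i j = s * ((if j = (⟨0, h0⟩ : Fin n) then 1 else 0)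
      + (if j = (⟨1, h1⟩ : Fin n) then 1 else 0)) + t * (if j = i then 1 else 0) := by
  simp [dnVec, dnE, EuclideanSpace.single_apply, mul_add]

private lemma dnVec_sum (h0 : 0 < n) (h1 : 1 < n) (s t : ℝ) (i : Fin n) :
    ∑ j, dnVec h0 h1 s t i j = 2 * s + t := by
  simp only [dnVec_apply]
  rw [Finset.sum_add_distrib, ← Finset.mul_sum, ← Finset.mul_sum, Finset.sum_add_distrib]
  simp
  ring

private lemma dnVec_inner (h0 : 0 < n) (h1 : 1 < n) (s t : ℝ) (i : Fin n)
    (hi : 2 ≤ (i : ℕ)) :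
    ⟪dnVec h0 h1 s t i, dnVec h0 h1 s t i⟫_ℝ = 2 * s ^ 2 + t ^ 2 := by
  have hi0 : i ≠ (⟨0, h0⟩ : Fin n) := by simp [Fin.ext_iff]; omega
  have hi1 : i ≠ (⟨1, h1⟩ : Fin n) := by simp [Fin.ext_iff]; omega
  have h01 : (⟨0, h0⟩ : Fin n) ≠ (⟨1, h1⟩ : Fin n) := by simp [Fin.ext_iff]
  simp [-inner_self_eq_norm_sq_to_K, dnVec, dnE, inner_add_left, inner_add_right, real_inner_smul_left,
    real_inner_smul_right, EuclideanSpace.inner_single_left, EuclideanSpace.single_apply,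
    hi0, hi1, h01, hi0.symm, hi1.symm, h01.symm]
  ring

private noncomputable def dnW (h0 : 0 < n) (h1 : 1 < n) (a b c : ℝ) (i : Fin n) :
    EuclideanSpace ℝ (Fin n) :=
  a • dnE ⟨0, h0⟩ + b • dnE ⟨1, h1⟩ + c • dnE i

private lemma dnW_apply (h0 : 0 < n) (h1 : 1 < n) (a b c : ℝ) (i : Fin n) (j : Fin n) :
    dnW h0 h1 a b c i j = a * (if j = (⟨0, h0⟩ : Fin n) then 1 else 0)
      + b * (if j = (⟨1, h1⟩ : Fin n) then 1 else 0) + c * (if j = i then 1 else 0) := by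
  simp [dnW, dnE, EuclideanSpace.single_apply]

private lemma dnW_sum (h0 : 0 < n) (h1 : 1 < n) (a b c : ℝ) (i : Fin n) :
    ∑ j, dnW h0 h1 a b c i j = a + b + c := by
  simp only [dnW_apply]
  rw [Finset.sum_add_distrib, Finset.sum_add_distrib, ← Finset.mul_sum, ← Finset.mul_sum,
    ← Finset.mul_sum]
  simp

/-- Reverse inclusion: the four standard vectors lie in `𝓔`. -/
private lemma dnVec_mem (hn : 4 ≤ n) (i : Fin n) (hi : 2 ≤ (i : ℕ)) (s t : ℤ)
    (hs : s = 1 ∨ s = -1) (ht : t = 2 ∨ t = -2) :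
    dnVec (by omega) (by omega) (s : ℝ) (t : ℝ) i ∈
      {y : EuclideanSpace ℝ (Fin n) |
        y ∈ {x : EuclideanSpace ℝ (Fin n) |
            (∀ i, ∃ k : ℤ, x i = (k : ℝ)) ∧ ∃ k : ℤ, ∑ i, x i = 2 * (k : ℝ)} ∧
        ⟪y, y⟫_ℝ = 6 ∧
        ∃ z ∈ {x : EuclideanSpace ℝ (Fin n) |
            (∀ i, ∃ k : ℤ, x i = (k : ℝ)) ∧ ∃ k : ℤ, ∑ i, x i = 2 * (k : ℝ)},
          dnVec (by omega) (by omega) (s : ℝ) (t : ℝ) i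
            - (EuclideanSpace.single (⟨0, by omega⟩ : Fin n) (1 : ℝ)
              - EuclideanSpace.single (⟨1, by omega⟩ : Fin n) (1 : ℝ)) = (2 : ℝ) • z} := by
  have h0 : 0 < n := by omega
  have h1 : 1 < n := by omega
  refine ⟨⟨?_, ?_⟩, ?_, ?_⟩
  · intro j
    refine ⟨s * ((if j = (⟨0, h0⟩ : Fin n) then 1 else 0)
      + (if j = (⟨1, h1⟩ : Fin n) then 1 else 0)) + t * (if j = i then 1 else 0), ?_⟩
    rw [dnVec_apply]
    push_cast
    split_ifs <;> norm_num
  · refine ⟨s + t / 2, ?_⟩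
    rw [dnVec_sum]
    rcases ht with rfl | rfl <;> push_cast <;> ring
  · rw [dnVec_inner _ _ _ _ _ hi]
    rcases hs with rfl | rfl <;> rcases ht with rfl | rfl <;> norm_num
  · refine ⟨dnW h0 h1 (((s - 1) / 2 : ℤ) : ℝ) (((s + 1) / 2 : ℤ) : ℝ) ((t / 2 : ℤ) : ℝ) i,
      ⟨?_, ?_⟩, ?_⟩
    · intro j
      refine ⟨((s - 1) / 2) * (if j = (⟨0, h0⟩ : Fin n) then 1 else 0)
        + ((s + 1) / 2) * (if j = (⟨1, h1⟩ : Fin n) then 1 else 0)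
        + (t / 2) * (if j = i then 1 else 0), ?_⟩
      rw [dnW_apply]
      push_cast
      split_ifs <;> norm_num
    · refine ⟨(2 * s + t) / 4, ?_⟩
      rw [dnW_sum]
      rcases hs with rfl | rfl <;> rcases ht with rfl | rfl <;> norm_num
    · ext j
      have hi0 : i ≠ (⟨0, h0⟩ : Fin n) := by simp [Fin.ext_iff]; omega
      have hi1 : i ≠ (⟨1, h1⟩ : Fin n) := by simp [Fin.ext_iff]; omega
      show dnVec h0 h1 (s : ℝ) (t : ℝ) i j - _ = (2 : ℝ) * dnW h0 h1 _ _ _ i j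
      rw [dnVec_apply, dnW_apply]
      simp only [PiLp.sub_apply, EuclideanSpace.single_apply]
      rcases hs with rfl | rfl <;> rcases ht with rfl | rfl <;>
        split_ifs <;> simp_all <;> norm_num

end DnAux

section DnAux2

variable {n : ℕ}

private noncomputable def dnG (h0 : 0 < n) (h1 : 1 < n)
    (x : {i : Fin n // 2 ≤ (i : ℕ)} × Bool × Bool) : EuclideanSpace ℝ (Fin n) :=
  dnVec h0 h1 (if x.2.1 then 1 else -1) (if x.2.2 then 2 else -2) x.1

private lemma dnG_inj (h0 : 0 < n) (h1 : 1 < n) : Function.Injective (dnG h0 h1) := by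
  rintro ⟨⟨i, hi⟩, s, t⟩ ⟨⟨i', hi'⟩, s', t'⟩ h
  have hi0 : i ≠ (⟨0, h0⟩ : Fin n) := by simp [Fin.ext_iff]; omega
  have hi1 : i ≠ (⟨1, h1⟩ : Fin n) := by simp [Fin.ext_iff]; omega
  have hi0' : i' ≠ (⟨0, h0⟩ : Fin n) := by simp [Fin.ext_iff]; omega
  have hi1' : i' ≠ (⟨1, h1⟩ : Fin n) := by simp [Fin.ext_iff]; omega
  have h00 := congrArg (· (⟨0, h0⟩ : Fin n)) h
  have hii := congrArg (· i) h
  have h01 : (⟨0, h0⟩ : Fin n) ≠ (⟨1, h1⟩ : Fin n) := by simp [Fin.ext_iff]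
  simp only [dnG, dnVec_apply] at h00 hii
  simp only [if_true, if_neg h01, if_neg (Ne.symm hi0), if_neg (Ne.symm hi0'),
    if_neg hi0, if_neg hi1, if_neg hi0', if_neg hi1', add_zero, zero_add, mul_zero,
    mul_one, if_pos rfl] at h00 hii
  have hss : s = s' := by rcases s <;> rcases s' <;> [rfl; norm_num at h00; norm_num at h00; rfl]
  by_cases hii' : i = i'
  · subst hii'
    rw [if_pos rfl] at hii
    have htt : t = t' := by rcases t <;> rcases t' <;> [rfl; norm_num at hii; norm_num at hii; rfl]
    simp [hss, htt]
  · rw [if_neg hii'] at hii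
    rcases t <;> norm_num at hii

private lemma dn_SV_eq_range (h0 : 0 < n) (h1 : 1 < n) :
    {y : EuclideanSpace ℝ (Fin n) | ∃ i : Fin n, 2 ≤ (i : ℕ) ∧ ∃ s t : ℤ,
      (s = 1 ∨ s = -1) ∧ (t = 2 ∨ t = -2) ∧ y = dnVec h0 h1 (s : ℝ) (t : ℝ) i}
    = Set.range (dnG h0 h1) := by
  ext y
  constructor
  · rintro ⟨i, hi, s, t, hs, ht, rfl⟩
    rcases hs with rfl | rfl <;> rcases ht with rfl | rfl
    exacts [⟨⟨⟨i, hi⟩, true, true⟩, by norm_num [dnG]⟩,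
      ⟨⟨⟨i, hi⟩, true, false⟩, by norm_num [dnG]⟩,
      ⟨⟨⟨i, hi⟩, false, true⟩, by norm_num [dnG]⟩,
      ⟨⟨⟨i, hi⟩, false, false⟩, by norm_num [dnG]⟩]
  · rintro ⟨⟨⟨i, hi⟩, s, t⟩, rfl⟩
    exact ⟨i, hi, (if s then 1 else -1), (if t then 2 else -2),
      by rcases s <;> simp, by rcases t <;> simp,
      by rcases s <;> rcases t <;> norm_num [dnG]⟩

private lemma dn_SV_eq_forms (h0 : 0 < n) (h1 : 1 < n) :
    {y : EuclideanSpace ℝ (Fin n) | ∃ i : Fin n, 2 ≤ (i : ℕ) ∧ ∃ s t : ℤ,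
      (s = 1 ∨ s = -1) ∧ (t = 2 ∨ t = -2) ∧ y = dnVec h0 h1 (s : ℝ) (t : ℝ) i}
    = {y : EuclideanSpace ℝ (Fin n) | ∃ i : Fin n, 2 ≤ (i : ℕ) ∧
        (y = EuclideanSpace.single (⟨0, h0⟩ : Fin n) (1 : ℝ)
              + EuclideanSpace.single (⟨1, h1⟩ : Fin n) (1 : ℝ)
              + (2 : ℝ) • EuclideanSpace.single i (1 : ℝ) ∨
         y = -(EuclideanSpace.single (⟨0, h0⟩ : Fin n) (1 : ℝ)
              + EuclideanSpace.single (⟨1, h1⟩ : Fin n) (1 : ℝ)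
              + (2 : ℝ) • EuclideanSpace.single i (1 : ℝ)) ∨
         y = EuclideanSpace.single (⟨0, h0⟩ : Fin n) (1 : ℝ)
              + EuclideanSpace.single (⟨1, h1⟩ : Fin n) (1 : ℝ)
              - (2 : ℝ) • EuclideanSpace.single i (1 : ℝ) ∨
         y = -(EuclideanSpace.single (⟨0, h0⟩ : Fin n) (1 : ℝ)
              + EuclideanSpace.single (⟨1, h1⟩ : Fin n) (1 : ℝ)
              - (2 : ℝ) • EuclideanSpace.single i (1 : ℝ)))} := by
  have hv : ∀ i : Fin n, ∀ s t : ℝ,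
      dnVec h0 h1 s t i = s • (EuclideanSpace.single (⟨0, h0⟩ : Fin n) (1 : ℝ)
        + EuclideanSpace.single (⟨1, h1⟩ : Fin n) (1 : ℝ))
        + t • EuclideanSpace.single i (1 : ℝ) := fun i s t => rfl
  ext y
  simp only [Set.mem_setOf_eq]
  constructor
  · rintro ⟨i, hi, s, t, hs, ht, rfl⟩
    refine ⟨i, hi, ?_⟩
    rcases hs with rfl | rfl <;> rcases ht with rfl | rfl
    · exact Or.inl (by rw [hv]; push_cast; module)
    · exact Or.inr (Or.inr (Or.inl (by rw [hv]; push_cast; module)))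
    · exact Or.inr (Or.inr (Or.inr (by rw [hv]; push_cast; module)))
    · exact Or.inr (Or.inl (by rw [hv]; push_cast; module))
  · rintro ⟨i, hi, rfl | rfl | rfl | rfl⟩
    · exact ⟨i, hi, 1, 2, Or.inl rfl, Or.inl rfl, by rw [hv]; push_cast; module⟩
    · exact ⟨i, hi, -1, -2, Or.inr rfl, Or.inr rfl, by rw [hv]; push_cast; module⟩
    · exact ⟨i, hi, 1, -2, Or.inl rfl, Or.inr rfl, by rw [hv]; push_cast; module⟩
    · exact ⟨i, hi, -1, 2, Or.inr rfl, Or.inl rfl, by rw [hv]; push_cast; module⟩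

private lemma dn_card_sub (h0 : 0 < n) (h1 : 1 < n) :
    Fintype.card {i : Fin n // 2 ≤ (i : ℕ)} = n - 2 := by
  rw [Fintype.card_subtype]
  have h2 : (Finset.univ.filter fun j : Fin n => ¬ 2 ≤ (j : ℕ)).card = 2 := by
    have he : (Finset.univ.filter fun j : Fin n => ¬ 2 ≤ (j : ℕ))
        = {(⟨0, h0⟩ : Fin n), ⟨1, h1⟩} := by
      ext j
      simp [Fin.ext_iff]
      omega
    rw [he, Finset.card_insert_of_notMem (by simp [Fin.ext_iff]), Finset.card_singleton]
  have h3 := Finset.card_filter_add_card_filter_not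
    (s := (Finset.univ : Finset (Fin n))) (p := fun j : Fin n => 2 ≤ (j : ℕ))
  simp only [Finset.card_univ, Fintype.card_fin] at h3
  omega

end DnAux2

/-- For the root lattice `D_n ⊂ ℝ^n` (`n ≥ 4`), with canonical basis
`ε₁, …, ε_n` (indexed here by `Fin n`, so `ε₁ = single ⟨0,_⟩ 1`, etc.) and
`x₀ = ε₁ − ε₂`, the set of vectors of norm `6` congruent to `x₀` mod `2D_n` is
`{±(ε₁ + ε₂ + 2ε_i), ±(ε₁ + ε₂ − 2ε_i) : 3 ≤ i ≤ n}`, of cardinality `4(n − 2)`. -/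
theorem D_n_norm_six_class (n : ℕ) (hn : 4 ≤ n)
    (D : Set (EuclideanSpace ℝ (Fin n)))
    (hD : D = {x | (∀ i, ∃ k : ℤ, x i = (k : ℝ)) ∧ ∃ k : ℤ, ∑ i, x i = 2 * (k : ℝ)})
    (x₀ : EuclideanSpace ℝ (Fin n))
    (hx₀ : x₀ = EuclideanSpace.single (⟨0, by omega⟩ : Fin n) (1 : ℝ)
              - EuclideanSpace.single (⟨1, by omega⟩ : Fin n) (1 : ℝ))
    (𝓔 : Set (EuclideanSpace ℝ (Fin n)))
    (h𝓔 : 𝓔 = {y | y ∈ D ∧ ⟪y, y⟫_ℝ = 6 ∧ ∃ z ∈ D, y - x₀ = (2 : ℝ) • z}) :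
    𝓔 = {y | ∃ i : Fin n, 2 ≤ (i : ℕ) ∧
          (y = EuclideanSpace.single (⟨0, by omega⟩ : Fin n) (1 : ℝ)
                + EuclideanSpace.single (⟨1, by omega⟩ : Fin n) (1 : ℝ)
                + (2 : ℝ) • EuclideanSpace.single i (1 : ℝ) ∨
           y = -(EuclideanSpace.single (⟨0, by omega⟩ : Fin n) (1 : ℝ)
                + EuclideanSpace.single (⟨1, by omega⟩ : Fin n) (1 : ℝ)
                + (2 : ℝ) • EuclideanSpace.single i (1 : ℝ)) ∨
           y = EuclideanSpace.single (⟨0, by omega⟩ : Fin n) (1 : ℝ)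
                + EuclideanSpace.single (⟨1, by omega⟩ : Fin n) (1 : ℝ)
                - (2 : ℝ) • EuclideanSpace.single i (1 : ℝ) ∨
           y = -(EuclideanSpace.single (⟨0, by omega⟩ : Fin n) (1 : ℝ)
                + EuclideanSpace.single (⟨1, by omega⟩ : Fin n) (1 : ℝ)
                - (2 : ℝ) • EuclideanSpace.single i (1 : ℝ)))} ∧
    Nat.card 𝓔 = 4 * (n - 2) := by
  subst hD hx₀ h𝓔
  have h0 : 0 < n := by omega
  have h1 : 1 < n := by omega
  have hSV : {y : EuclideanSpace ℝ (Fin n) |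
      y ∈ {x : EuclideanSpace ℝ (Fin n) |
          (∀ i, ∃ k : ℤ, x i = (k : ℝ)) ∧ ∃ k : ℤ, ∑ i, x i = 2 * (k : ℝ)} ∧
      ⟪y, y⟫_ℝ = 6 ∧
      ∃ z ∈ {x : EuclideanSpace ℝ (Fin n) |
          (∀ i, ∃ k : ℤ, x i = (k : ℝ)) ∧ ∃ k : ℤ, ∑ i, x i = 2 * (k : ℝ)},
        y - (EuclideanSpace.single (⟨0, h0⟩ : Fin n) (1 : ℝ)
          - EuclideanSpace.single (⟨1, h1⟩ : Fin n) (1 : ℝ)) = (2 : ℝ) • z}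
      = {y : EuclideanSpace ℝ (Fin n) | ∃ i : Fin n, 2 ≤ (i : ℕ) ∧ ∃ s t : ℤ,
          (s = 1 ∨ s = -1) ∧ (t = 2 ∨ t = -2) ∧ y = dnVec h0 h1 (s : ℝ) (t : ℝ) i} := by
    ext y
    simp only [Set.mem_setOf_eq]
    constructor
    · rintro ⟨⟨hint, -⟩, hnorm, z, ⟨hzint, mz, hzsum⟩, hz⟩
      choose a ha using hint
      choose b hb using hzint
      have hzj : ∀ j : Fin n, (a j : ℝ)
          - ((if j = (⟨0, h0⟩ : Fin n) then (1 : ℝ) else 0)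
            - (if j = (⟨1, h1⟩ : Fin n) then (1 : ℝ) else 0)) = 2 * (b j : ℝ) := by
        intro j
        have h := congrArg (· j) hz
        simpa [PiLp.sub_apply, PiLp.smul_apply, smul_eq_mul,
          EuclideanSpace.single_apply, ha j, hb j] using h
      have e0 : ∀ j : Fin n, (j = (⟨0, h0⟩ : Fin n)) ↔ ((j : ℕ) = 0) := by
        intro j; simp [Fin.ext_iff]
      have e1 : ∀ j : Fin n, (j = (⟨1, h1⟩ : Fin n)) ↔ ((j : ℕ) = 1) := by
        intro j; simp [Fin.ext_iff]
      have hab : ∀ j : Fin n, a j = 2 * b j + (if (j : ℕ) = 0 then 1 else 0)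
          - (if (j : ℕ) = 1 then 1 else 0) := by
        intro j
        have h := hzj j
        by_cases hc : (j : ℕ) = 0 <;> by_cases hc' : (j : ℕ) = 1
        · omega
        · rw [if_pos ((e0 j).mpr hc), if_neg (fun hh => hc' ((e1 j).mp hh))] at h
          have h' : a j = 2 * b j + 1 := by exact_mod_cast (by linarith : (a j : ℝ) = 2 * (b j : ℝ) + 1)
          rw [if_pos hc, if_neg hc']; omega
        · rw [if_neg (fun hh => hc ((e0 j).mp hh)), if_pos ((e1 j).mpr hc')] at h
          have h' : a j = 2 * b j - 1 := by exact_mod_cast (by linarith : (a j : ℝ) = 2 * (b j : ℝ) - 1)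
          rw [if_neg hc, if_pos hc']; omega
        · rw [if_neg (fun hh => hc ((e0 j).mp hh)), if_neg (fun hh => hc' ((e1 j).mp hh))] at h
          have h' : a j = 2 * b j := by exact_mod_cast (by linarith : (a j : ℝ) = 2 * (b j : ℝ))
          rw [if_neg hc, if_neg hc']; omega
      have hn6 : ∑ j, a j * a j = 6 := by
        have hre : ((∑ j, a j * a j : ℤ) : ℝ) = 6 := by
          push_cast
          rw [← hnorm, PiLp.inner_apply]
          exact Finset.sum_congr rfl (fun j _ => by simp [RCLike.inner_apply, ha j, sq])
        exact_mod_cast hre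
      have hsum4 : ∃ m : ℤ, ∑ j, a j = 4 * m := by
        refine ⟨mz, ?_⟩
        have hbz : ∑ j, (b j : ℝ) = 2 * (mz : ℝ) := by
          rw [← hzsum]; exact Finset.sum_congr rfl (fun j _ => (hb j).symm)
        have hs : ((∑ j, a j : ℤ) : ℝ) = 4 * (mz : ℝ) := by
          push_cast
          have : ∑ j, (a j : ℝ) = ∑ j, (((if j = (⟨0, h0⟩ : Fin n) then (1 : ℝ) else 0)
              - (if j = (⟨1, h1⟩ : Fin n) then (1 : ℝ) else 0)) + 2 * (b j : ℝ)) :=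
            Finset.sum_congr rfl (fun j _ => by linarith [hzj j])
          rw [this, Finset.sum_add_distrib, Finset.sum_sub_distrib, ← Finset.mul_sum, hbz]
          simp
          ring
        exact_mod_cast hs
      obtain ⟨i, hi2, s, t, hs, ht, hform⟩ := Dn_key n hn a b hab hn6 hsum4
      refine ⟨i, hi2, s, t, hs, ht, ?_⟩
      ext j
      have hfj := hform j
      show y j = dnVec h0 h1 (s : ℝ) (t : ℝ) i j
      rw [ha j, dnVec_apply, if_congr (e0 j) rfl rfl, if_congr (e1 j) rfl rfl]
      split_ifs at hfj ⊢ <;> (rw [hfj]; push_cast; ring)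
    · rintro ⟨i, hi, s, t, hs, ht, rfl⟩
      exact dnVec_mem hn i hi s t hs ht
  constructor
  · exact hSV.trans (dn_SV_eq_forms h0 h1)
  · have hR := hSV.trans (dn_SV_eq_range h0 h1)
    have hc : Nat.card ({y : EuclideanSpace ℝ (Fin n) |
        y ∈ {x : EuclideanSpace ℝ (Fin n) |
            (∀ i, ∃ k : ℤ, x i = (k : ℝ)) ∧ ∃ k : ℤ, ∑ i, x i = 2 * (k : ℝ)} ∧
        ⟪y, y⟫_ℝ = 6 ∧
        ∃ z ∈ {x : EuclideanSpace ℝ (Fin n) |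
            (∀ i, ∃ k : ℤ, x i = (k : ℝ)) ∧ ∃ k : ℤ, ∑ i, x i = 2 * (k : ℝ)},
          y - (EuclideanSpace.single (⟨0, h0⟩ : Fin n) (1 : ℝ)
            - EuclideanSpace.single (⟨1, h1⟩ : Fin n) (1 : ℝ)) = (2 : ℝ) • z} :
        Set (EuclideanSpace ℝ (Fin n))) = 4 * (n - 2) := by
      rw [hR, Nat.card_range_of_injective (dnG_inj h0 h1), Nat.card_eq_fintype_card,
        Fintype.card_prod, Fintype.card_prod, Fintype.card_bool, dn_card_sub h0 h1]
      omega
    exact hc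
end

section
/- Let E₈ = {x ∈ ℝ⁸ : (all coordinates x_i ∈ ℤ, or all coordinates x_i ∈ ℤ + 1/2) and Σ_i x_i ∈ 2ℤ}, a lattice of minimum 2 in ℝ⁸ with the standard inner product, and let e = (1/2, 1/2, …, 1/2). Then the set {y ∈ E₈ : N(y) = 6 and y − e ∈ 2E₈} consists exactly of the vectors ±σ((3, 3, −1, −1, −1, −1, −1, −1)/2) for permutations σ of the coordinates, and has cardinality 56 (i.e. 28 pairs ±y). -/
open scoped InnerProductSpace

noncomputable def E8F (s : Finset (Fin 8)) (b : Bool) : EuclideanSpace ℝ (Fin 8) :=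
  WithLp.toLp 2 (fun i => (if b then (1:ℝ) else -1) * (if i ∈ s then (3:ℝ)/2 else -(1:ℝ)/2))

lemma sum_ite_card (s : Finset (Fin 8)) (a c : ℝ) :
    ∑ i, (if i ∈ s then a else c) = s.card * (a - c) + 8 * c := by
  have h : ∀ i : Fin 8, (if i ∈ s then a else c) = (if i ∈ s then a - c else 0) + c := by
    intro i; split <;> ring
  rw [Finset.sum_congr rfl fun i _ => h i, Finset.sum_add_distrib]
  rw [Finset.sum_ite_mem, Finset.univ_inter, Finset.sum_const, Finset.sum_const]
  simp only [nsmul_eq_mul, Finset.card_univ, Fintype.card_fin]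
  push_cast; ring

lemma tlem1 (m : ℤ) : 0 ≤ 2*m^2 + m ∧ (2*m^2 + m ≤ 2 → m = 0 ∨ m = -1) := by
  rcases le_or_gt m (-2) with h | h
  · constructor
    · nlinarith
    · intro h2; nlinarith
  rcases le_or_gt 1 m with h2 | h2
  · constructor
    · nlinarith
    · intro h3; nlinarith
  · interval_cases m <;> simp
lemma tlem2 (m : ℤ) : 0 ≤ 2*m^2 + 3*m + 1 ∧ (2*m^2 + 3*m + 1 ≤ 2 → m = 0 ∨ m = -1) := by
  rcases le_or_gt m (-2) with h | h
  · constructor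
    · nlinarith
    · intro h2; nlinarith
  rcases le_or_gt 1 m with h2 | h2
  · constructor
    · nlinarith
    · intro h3; nlinarith
  · interval_cases m <;> simp

lemma classify (y z : EuclideanSpace ℝ (Fin 8))
    (hy₁ : (∀ i, ∃ k : ℤ, y i = (k : ℝ)) ∨ (∀ i, ∃ k : ℤ, y i = (k : ℝ) + 1 / 2))
    (hy₂ : ∑ i, y i * y i = 6)
    (hz : (∀ i, ∃ k : ℤ, z i = (k : ℝ)) ∨ (∀ i, ∃ k : ℤ, z i = (k : ℝ) + 1 / 2))
    (hyz : ∀ i, y i - 1/2 = 2 * z i) :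
    ∃ s : Finset (Fin 8), s.card = 2 ∧ ∃ b, y = E8F s b := by
  rcases hy₁ with hy₁ | hy₁
  · -- integer case: impossible
    exfalso
    obtain ⟨k, hk⟩ := hy₁ 0
    have h0 := hyz 0
    rcases hz with hz | hz
    · obtain ⟨m, hm⟩ := hz 0
      rw [hk, hm] at h0
      have : (2*k - 1 : ℝ) = 4*m := by linarith
      have : (2*k - 1 : ℤ) = 4*m := by exact_mod_cast this
      omega
    · obtain ⟨m, hm⟩ := hz 0
      rw [hk, hm] at h0
      have : (2*k - 1 : ℝ) = 4*m + 2 := by linarith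
      have : (2*k - 1 : ℤ) = 4*m + 2 := by exact_mod_cast this
      omega
  · choose b hb using hy₁
    -- y i = (2 b i + 1)/2
    set a : Fin 8 → ℤ := fun i => 2 * b i + 1 with ha
    have hya : ∀ i, y i = (a i : ℝ) / 2 := by
      intro i; rw [hb i, ha]; push_cast; ring
    have hsq : ∑ i, (a i)^2 = 24 := by
      have h1 : ∑ i, ((a i : ℝ))^2 = 24 := by
        have : ∀ i : Fin 8, y i * y i = ((a i : ℝ))^2 / 4 := by
          intro i; rw [hya i]; ring
        rw [Finset.sum_congr rfl fun i _ => this i] at hy₂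
        rw [← Finset.sum_div] at hy₂
        linarith
      exact_mod_cast h1
  -- now case on z
    rcases hz with hz | hz
    · -- z integer : a i = 4 m i + 1, minus sign
      choose m hm using hz
      have ham : ∀ i, a i = 4 * m i + 1 := by
        intro i
        have h0 := hyz i
        rw [hya i, hm i] at h0
        have : ((a i : ℝ)) = 4 * m i + 1 := by linarith
        exact_mod_cast this
      set t : Fin 8 → ℤ := fun i => 2*(m i)^2 + m i with ht
      have hts : ∑ i, t i = 2 := by
        have : ∀ i : Fin 8, (a i)^2 = 8 * t i + 1 := by
          intro i; rw [ham i, ht]; ring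
        rw [Finset.sum_congr rfl fun i _ => this i, Finset.sum_add_distrib,
          ← Finset.mul_sum, Finset.sum_const] at hsq
        simp at hsq; omega
      have htnn : ∀ i, 0 ≤ t i := fun i => (tlem1 (m i)).1
      have hcases : ∀ i, m i = 0 ∨ m i = -1 := by
        intro i
        apply (tlem1 (m i)).2
        calc t i ≤ ∑ j, t j := Finset.single_le_sum (fun j _ => htnn j) (Finset.mem_univ i)
        _ = 2 := hts
      set s : Finset (Fin 8) := Finset.univ.filter (fun i => m i = -1) with hs
      have hcard : s.card = 2 := by
        have : ∀ i : Fin 8, t i = if m i = -1 then 1 else 0 := by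
          intro i
          rcases hcases i with h | h <;> rw [ht] <;> simp [h]
        rw [Finset.sum_congr rfl fun i _ => this i, Finset.sum_boole] at hts
        exact_mod_cast hts
      refine ⟨s, hcard, false, ?_⟩
      ext i
      show y i = E8F s false i
      rw [hya i, ham i]
      simp only [E8F, hs, Finset.mem_filter, Finset.mem_univ, true_and]
      rcases hcases i with h | h <;> rw [h] <;> norm_num
    · -- z half integer : a i = 4 m i + 3, plus sign
      choose m hm using hz
      have ham : ∀ i, a i = 4 * m i + 3 := by
        intro i
        have h0 := hyz i
        rw [hya i, hm i] at h0
        have : ((a i : ℝ)) = 4 * m i + 3 := by linarith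
        exact_mod_cast this
      set t : Fin 8 → ℤ := fun i => 2*(m i)^2 + 3 * m i + 1 with ht
      have hts : ∑ i, t i = 2 := by
        have : ∀ i : Fin 8, (a i)^2 = 8 * t i + 1 := by
          intro i; rw [ham i, ht]; ring
        rw [Finset.sum_congr rfl fun i _ => this i, Finset.sum_add_distrib,
          ← Finset.mul_sum, Finset.sum_const] at hsq
        simp at hsq; omega
      have htnn : ∀ i, 0 ≤ t i := fun i => (tlem2 (m i)).1
      have hcases : ∀ i, m i = 0 ∨ m i = -1 := by
        intro i
        apply (tlem2 (m i)).2
        calc t i ≤ ∑ j, t j := Finset.single_le_sum (fun j _ => htnn j) (Finset.mem_univ i)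
        _ = 2 := hts
      set s : Finset (Fin 8) := Finset.univ.filter (fun i => m i = 0) with hs
      have hcard : s.card = 2 := by
        have : ∀ i : Fin 8, t i = if m i = 0 then 1 else 0 := by
          intro i
          rcases hcases i with h | h <;> rw [ht] <;> simp [h]
        rw [Finset.sum_congr rfl fun i _ => this i, Finset.sum_boole] at hts
        exact_mod_cast hts
      refine ⟨s, hcard, true, ?_⟩
      ext i
      show y i = E8F s true i
      rw [hya i, ham i]
      simp only [E8F, hs, Finset.mem_filter, Finset.mem_univ, true_and]
      rcases hcases i with h | h <;> rw [h] <;> norm_num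
lemma E8F_true (s : Finset (Fin 8)) (i : Fin 8) :
    E8F s true i = if i ∈ s then (3:ℝ)/2 else -(1:ℝ)/2 := by
  simp [E8F]

lemma E8F_false (s : Finset (Fin 8)) (i : Fin 8) :
    E8F s false i = if i ∈ s then -(3:ℝ)/2 else (1:ℝ)/2 := by
  simp [E8F]; split <;> norm_num

lemma E8F_props (s : Finset (Fin 8)) (hs : s.card = 2) (b : Bool) :
    ((∀ i, ∃ k : ℤ, E8F s b i = (k:ℝ)) ∨ (∀ i, ∃ k : ℤ, E8F s b i = (k:ℝ) + 1/2)) ∧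
    (∃ k : ℤ, ∑ i, E8F s b i = 2*(k:ℝ)) ∧
    (∑ i, E8F s b i * E8F s b i = 6) ∧
    ∃ z : EuclideanSpace ℝ (Fin 8),
      ((∀ i, ∃ k : ℤ, z i = (k:ℝ)) ∨ (∀ i, ∃ k : ℤ, z i = (k:ℝ) + 1/2)) ∧
      (∃ k : ℤ, ∑ i, z i = 2*(k:ℝ)) ∧ (∀ i, E8F s b i - 1/2 = 2 * z i) := by
  cases b
  · refine ⟨Or.inr fun i => ?_, ⟨0, ?_⟩, ?_, WithLp.toLp 2 (fun i => if i ∈ s then (-1:ℝ) else 0), Or.inl fun i => ?_, ⟨-1, ?_⟩, fun i => ?_⟩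
    · rw [E8F_false]; by_cases h : i ∈ s
      · exact ⟨-2, by norm_num [h]⟩
      · exact ⟨0, by norm_num [h]⟩
    · rw [Finset.sum_congr rfl fun i _ => E8F_false s i, sum_ite_card, hs]; norm_num
    · have : ∀ i : Fin 8, E8F s false i * E8F s false i = if i ∈ s then (9:ℝ)/4 else 1/4 := by
        intro i; rw [E8F_false]; split <;> norm_num
      rw [Finset.sum_congr rfl fun i _ => this i, sum_ite_card, hs]; norm_num
    · by_cases h : i ∈ s
      · exact ⟨-1, by simp [h]⟩
      · exact ⟨0, by simp [h]⟩
    · show ∑ i, (if i ∈ s then (-1:ℝ) else 0) = _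
      rw [sum_ite_card, hs]; norm_num
    · show E8F s false i - 1/2 = 2 * (if i ∈ s then (-1:ℝ) else 0)
      rw [E8F_false]; by_cases h : i ∈ s <;> simp [h] <;> norm_num
  · refine ⟨Or.inr fun i => ?_, ⟨0, ?_⟩, ?_, WithLp.toLp 2 (fun i => if i ∈ s then (1:ℝ)/2 else -(1:ℝ)/2), Or.inr fun i => ?_, ⟨-1, ?_⟩, fun i => ?_⟩
    · rw [E8F_true]; by_cases h : i ∈ s
      · exact ⟨1, by norm_num [h]⟩
      · exact ⟨-1, by norm_num [h]⟩
    · rw [Finset.sum_congr rfl fun i _ => E8F_true s i, sum_ite_card, hs]; norm_num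
    · have : ∀ i : Fin 8, E8F s true i * E8F s true i = if i ∈ s then (9:ℝ)/4 else 1/4 := by
        intro i; rw [E8F_true]; split <;> norm_num
      rw [Finset.sum_congr rfl fun i _ => this i, sum_ite_card, hs]; norm_num
    · by_cases h : i ∈ s
      · exact ⟨0, by simp [h]⟩
      · exact ⟨-1, by norm_num [h]⟩
    · show ∑ i, (if i ∈ s then (1:ℝ)/2 else -(1:ℝ)/2) = _
      rw [sum_ite_card, hs]; norm_num
    · show E8F s true i - 1/2 = 2 * (if i ∈ s then (1:ℝ)/2 else -(1:ℝ)/2)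
      rw [E8F_true]; by_cases h : i ∈ s <;> simp [h] <;> norm_num

lemma fin8_lt_two (j : Fin 8) : (j:ℕ) < 2 ↔ j = 0 ∨ j = 1 := by
  revert j; decide

lemma exists_perm (s : Finset (Fin 8)) (hs : s.card = 2) :
    ∃ σ : Equiv.Perm (Fin 8), ∀ i, (i ∈ s ↔ ((σ i : ℕ) < 2)) := by
  obtain ⟨i₀, i₁, hne, rfl⟩ := Finset.card_eq_two.mp hs
  set s1 : Equiv.Perm (Fin 8) := Equiv.swap i₀ 0 with hs1
  set σ : Equiv.Perm (Fin 8) := s1.trans (Equiv.swap (s1 i₁) 1) with hσ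
  have h0 : σ i₀ = 0 := by
    rw [hσ]; simp only [Equiv.trans_apply, hs1, Equiv.swap_apply_left]
    apply Equiv.swap_apply_of_ne_of_ne
    · intro h; exact hne (s1.injective (by rw [← h, Equiv.swap_apply_left]))
    · decide
  have h1 : σ i₁ = 1 := by
    rw [hσ]; simp only [Equiv.trans_apply, Equiv.swap_apply_left]
  refine ⟨σ, fun i => ?_⟩
  rw [fin8_lt_two, Finset.mem_insert, Finset.mem_singleton]
  constructor
  · rintro (rfl | rfl)
    · exact Or.inl h0
    · exact Or.inr h1
  · rintro (h | h)
    · exact Or.inl (σ.injective (h.trans h0.symm))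
    · exact Or.inr (σ.injective (h.trans h1.symm))

lemma perm_to_finset (σ : Equiv.Perm (Fin 8)) :
    ∃ s : Finset (Fin 8), s.card = 2 ∧ ∀ i, (i ∈ s ↔ ((σ i : ℕ) < 2)) := by
  refine ⟨{σ.symm 0, σ.symm 1}, ?_, fun i => ?_⟩
  · rw [Finset.card_insert_of_notMem, Finset.card_singleton]
    simp only [Finset.mem_singleton]
    intro h; exact absurd (σ.symm.injective h) (by decide)
  · rw [fin8_lt_two, Finset.mem_insert, Finset.mem_singleton]
    constructor
    · rintro (rfl | rfl) <;> simp
    · rintro (h | h)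
      · left; rw [← h]; simp
      · right; rw [← h]; simp

lemma E8F_eq_at (s s' : Finset (Fin 8)) (b b' : Bool) (i : Fin 8)
    (h : E8F s b i = E8F s' b' i) : (i ∈ s ↔ i ∈ s') ∧ b = b' := by
  simp only [E8F, PiLp.toLp_apply] at h
  rcases b <;> rcases b' <;> by_cases h1 : i ∈ s <;> by_cases h2 : i ∈ s' <;>
    simp only [h1, h2, if_true, if_false] at h ⊢ <;> norm_num at h <;> simp [h1, h2]

/-- For the lattice `E₈ ⊂ ℝ⁸` and `e = (1/2, …, 1/2)`, the set of
vectors of norm `6` congruent to `e` mod `2E₈` consists exactly of the vectors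
`±σ((3, 3, −1, −1, −1, −1, −1, −1)/2)` for coordinate permutations `σ`, and has
cardinality `56` (i.e. `28` pairs `±y`). -/
theorem E8_norm_six_class
    (E8 : Set (EuclideanSpace ℝ (Fin 8)))
    (hE8 : E8 = {x | ((∀ i, ∃ k : ℤ, x i = (k : ℝ)) ∨ (∀ i, ∃ k : ℤ, x i = (k : ℝ) + 1 / 2))
                  ∧ ∃ k : ℤ, ∑ i, x i = 2 * (k : ℝ)})
    (e : EuclideanSpace ℝ (Fin 8)) (he : ∀ i, e i = 1 / 2)
    (w : EuclideanSpace ℝ (Fin 8))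
    (hw : ∀ i : Fin 8, w i = if (i : ℕ) < 2 then (3 : ℝ) / 2 else -(1 : ℝ) / 2)
    (𝓔 : Set (EuclideanSpace ℝ (Fin 8)))
    (h𝓔 : 𝓔 = {y | y ∈ E8 ∧ ⟪y, y⟫_ℝ = 6 ∧ ∃ z ∈ E8, y - e = (2 : ℝ) • z}) :
    𝓔 = {y | ∃ σ : Equiv.Perm (Fin 8), (∀ i, y i = w (σ i)) ∨ (∀ i, y i = -w (σ i))} ∧
    Nat.card 𝓔 = 56 := by
  have hinner : ∀ y : EuclideanSpace ℝ (Fin 8), ⟪y, y⟫_ℝ = ∑ i, y i * y i := by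
    intro y; rw [PiLp.inner_apply]; simp [RCLike.inner_apply, sq]
  have hmain : 𝓔 = {y | ∃ s : Finset (Fin 8), s.card = 2 ∧ ∃ b : Bool, y = E8F s b} := by
    rw [h𝓔, hE8]
    ext y
    simp only [Set.mem_setOf_eq]
    constructor
    · rintro ⟨⟨hy₁, -⟩, hy₂, z, ⟨hz₁, -⟩, hyz⟩
      refine classify y z hy₁ ?_ hz₁ ?_
      · rw [← hinner y]; exact hy₂
      · intro i
        have h := congrArg (fun v : EuclideanSpace ℝ (Fin 8) => v i) hyz
        simp only [PiLp.sub_apply, PiLp.smul_apply, smul_eq_mul, he i] at h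
        exact h
    · rintro ⟨s, hs, b, rfl⟩
      obtain ⟨hhalf, hsum, hnorm, z, hz₁, hz₂, hz₃⟩ := E8F_props s hs b
      refine ⟨⟨hhalf, hsum⟩, by rw [hinner]; exact hnorm, z, ⟨hz₁, hz₂⟩, ?_⟩
      ext i
      simp only [PiLp.sub_apply, PiLp.smul_apply, smul_eq_mul, he i]
      exact hz₃ i
  constructor
  · rw [hmain]
    ext y
    simp only [Set.mem_setOf_eq]
    constructor
    · rintro ⟨s, hs, b, rfl⟩
      obtain ⟨σ, hσ⟩ := exists_perm s hs
      refine ⟨σ, ?_⟩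
      cases b
      · right; intro i
        rw [E8F_false, hw (σ i)]
        by_cases h : i ∈ s
        · rw [if_pos h, if_pos ((hσ i).mp h)]; norm_num
        · rw [if_neg h, if_neg (fun hc => h ((hσ i).mpr hc))]; norm_num
      · left; intro i
        rw [E8F_true, hw (σ i)]
        by_cases h : i ∈ s
        · rw [if_pos h, if_pos ((hσ i).mp h)]
        · rw [if_neg h, if_neg (fun hc => h ((hσ i).mpr hc))]
    · rintro ⟨σ, hy | hy⟩
      · obtain ⟨s, hs, hmem⟩ := perm_to_finset σ
        refine ⟨s, hs, true, ?_⟩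
        ext i
        rw [hy i, hw (σ i), E8F_true]
        by_cases h : i ∈ s
        · rw [if_pos h, if_pos ((hmem i).mp h)]
        · rw [if_neg h, if_neg (fun hc => h ((hmem i).mpr hc))]
      · obtain ⟨s, hs, hmem⟩ := perm_to_finset σ
        refine ⟨s, hs, false, ?_⟩
        ext i
        rw [hy i, hw (σ i), E8F_false]
        by_cases h : i ∈ s
        · rw [if_pos h, if_pos ((hmem i).mp h)]; norm_num
        · rw [if_neg h, if_neg (fun hc => h ((hmem i).mpr hc))]; norm_num
  · rw [hmain]
    have hrange : {y : EuclideanSpace ℝ (Fin 8) | ∃ s : Finset (Fin 8), s.card = 2 ∧ ∃ b : Bool, y = E8F s b}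
        = Set.range (fun p : {s : Finset (Fin 8) // s.card = 2} × Bool => E8F p.1.1 p.2) := by
      ext y
      simp only [Set.mem_setOf_eq, Set.mem_range]
      constructor
      · rintro ⟨s, hs, b, rfl⟩; exact ⟨(⟨s, hs⟩, b), rfl⟩
      · rintro ⟨⟨⟨s, hs⟩, b⟩, rfl⟩; exact ⟨s, hs, b, rfl⟩
    rw [hrange, Nat.card_range_of_injective]
    · rw [Nat.card_eq_fintype_card, Fintype.card_prod, Fintype.card_finset_len, Fintype.card_bool]
      rfl
    · rintro ⟨⟨s, hs⟩, b⟩ ⟨⟨s', hs'⟩, b'⟩ h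
      have hpt : ∀ i, E8F s b i = E8F s' b' i :=
        fun i => congrArg (fun v : EuclideanSpace ℝ (Fin 8) => v i) h
      have hb := (E8F_eq_at s s' b b' 0 (hpt 0)).2
      have hss : s = s' := Finset.ext fun i => (E8F_eq_at s s' b b' i (hpt i)).1
      simp only [Prod.mk.injEq, Subtype.mk.injEq]
      exact ⟨hss, hb⟩
end
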